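/- arXiv:2008.06577 — 11 statements merged into one kernel-verified Lean document; each statement's English description precedes it below -/
import Mathlib

section
/- Let z be a complex number with nonnegative real part and |z| ≤ ρ for some ρ > 0, and let ℓ ≥ 3 be an odd integer. Then Re(z^ℓ) ≤ ℓ·ρ^(ℓ-1)·Re(z), with equality if and only if Re(z) = 0. -/
open Complex ComplexConjugate Finset

theorem norm_pow_sub_pow_lt {𝕜 : Type*} [NormedField 𝕜] {a b : 𝕜} {r : ℝ} {n : ℕ}
    (hn : 2 ≤ n) (ha : ‖a‖ ≤ r) (hb : ‖b‖ < r) (hab : a ≠ b) :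
    ‖a ^ n - b ^ n‖ < n * r ^ (n - 1) * ‖a - b‖ := by
  have hr : 0 ≤ r := (norm_nonneg b).trans hb.le
  have hsum : ‖∑ i ∈ range n, a ^ i * b ^ (n - 1 - i)‖ < n * r ^ (n - 1) :=
    calc ‖∑ i ∈ range n, a ^ i * b ^ (n - 1 - i)‖
        ≤ ∑ i ∈ range n, ‖a‖ ^ i * ‖b‖ ^ (n - 1 - i) := by
          simpa only [norm_mul, norm_pow] using norm_sum_le (range n) fun i => a ^ i * b ^ (n - 1 - i)
      _ < ∑ _i ∈ range n, r ^ (n - 1) := by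
          refine sum_lt_sum (fun i hi => ?_) ⟨0, by simp; omega, ?_⟩
          · rw [mem_range] at hi
            calc ‖a‖ ^ i * ‖b‖ ^ (n - 1 - i) ≤ r ^ i * r ^ (n - 1 - i) := by gcongr
              _ = r ^ (n - 1) := by rw [← pow_add]; congr 1; omega
          · simpa using pow_lt_pow_left₀ hb (norm_nonneg b) (by omega)
      _ = n * r ^ (n - 1) := by simp
  rw [← geom_sum₂_mul, norm_mul]
  exact mul_lt_mul_of_pos_right hsum (norm_pos_iff.2 (sub_ne_zero.2 hab))

theorem Complex.re_pow_eq_zero_of_odd {z : ℂ} {n : ℕ} (hn : Odd n) (hz : z.re = 0) :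
    (z ^ n).re = 0 := by
  have hconj : conj z = -z := Complex.ext (by simp [hz]) (by simp)
  have h : (conj (z ^ n)).re = (-z ^ n).re := by rw [map_pow, hconj, hn.neg_pow]
  rw [conj_re, neg_re] at h
  linarith

/-- Compare `z` with its projection `z.im * I` onto the imaginary axis, where `z ^ n` is
purely imaginary: the real parts differ by at most the Lipschitz constant times `z.re`. -/
theorem Complex.re_pow_lt_of_re_pos {z : ℂ} {ρ : ℝ} {n : ℕ} (hn : 2 ≤ n) (hodd : Odd n)
    (hre : 0 < z.re) (hz : ‖z‖ ≤ ρ) : (z ^ n).re < n * ρ ^ (n - 1) * z.re := by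
  set w : ℂ := z.im * I
  have hzw : z - w = z.re := by
    apply Complex.ext <;> simp [w]
  have hw : ‖w‖ < ρ := by
    simpa [w] using (abs_im_lt_norm.2 hre.ne').trans_le hz
  have hwn : (w ^ n).re = 0 := re_pow_eq_zero_of_odd hodd (by simp [w])
  calc (z ^ n).re = (z ^ n - w ^ n).re := by simp [hwn]
    _ ≤ ‖z ^ n - w ^ n‖ := re_le_norm _
    _ < n * ρ ^ (n - 1) * ‖z - w‖ :=
        norm_pow_sub_pow_lt hn hz hw (sub_ne_zero.1 (by simp [hzw, hre.ne']))
    _ = n * ρ ^ (n - 1) * z.re := by rw [hzw, norm_real, Real.norm_of_nonneg hre.le]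

theorem stmt_0_general (z : ℂ) (ρ : ℝ) (ℓ : ℕ) (hℓ : 3 ≤ ℓ) (hodd : Odd ℓ)
    (hre : 0 ≤ z.re) (habs : ‖z‖ ≤ ρ) :
    (z ^ ℓ).re ≤ ℓ * ρ ^ (ℓ - 1) * z.re ∧
      ((z ^ ℓ).re = ℓ * ρ ^ (ℓ - 1) * z.re ↔ z.re = 0) := by
  rcases hre.eq_or_lt with h0 | hpos
  · simp [re_pow_eq_zero_of_odd hodd h0.symm, ← h0]
  · have hlt := re_pow_lt_of_re_pos (by omega) hodd hpos habs
    exact ⟨hlt.le, iff_of_false hlt.ne hpos.ne'⟩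

theorem stmt_0 (z : ℂ) (ρ : ℝ) (ℓ : ℕ) (hℓ : 3 ≤ ℓ) (hodd : Odd ℓ)
    (hρ : 0 < ρ) (hre : 0 ≤ z.re) (habs : ‖z‖ ≤ ρ) :
    (z ^ ℓ).re ≤ ℓ * ρ ^ (ℓ - 1) * z.re ∧
      ((z ^ ℓ).re = ℓ * ρ ^ (ℓ - 1) * z.re ↔ z.re = 0) :=
  stmt_0_general z ρ ℓ hℓ hodd hre habs
end

section
/- Let z be a nonzero complex number with nonnegative real part and |z| ≤ ρ for some ρ > 0, and let ℓ ≥ 6 be an even integer not divisible by four. Then Re(z^ℓ) < ℓ·ρ^(ℓ-1)·Re(z). -/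
/-! Write `z = x + iy` and `w = iy`. Since `ℓ ≡ 2 (mod 4)`, `Re (w ^ ℓ) = -y ^ ℓ`, and since
`z - w = x`, the factorisation of `z ^ ℓ - w ^ ℓ` bounds its norm by `ℓ ρ ^ (ℓ - 1) x`. Hence
`Re (z ^ ℓ) ≤ -y ^ ℓ + ℓ ρ ^ (ℓ - 1) x`, which is strict unless `y = 0`; in that case `z = x > 0`
and `x ^ ℓ ≤ ρ ^ (ℓ - 1) x < ℓ ρ ^ (ℓ - 1) x`. -/

open Complex Finset

theorem norm_pow_sub_pow_le {R : Type*} [NormedCommRing R] [NormOneClass R] {a b : R} {ρ : ℝ}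
    (n : ℕ) (ha : ‖a‖ ≤ ρ) (hb : ‖b‖ ≤ ρ) :
    ‖a ^ n - b ^ n‖ ≤ n * ρ ^ (n - 1) * ‖a - b‖ := by
  rw [← Commute.geom_sum₂_mul (Commute.all a b)]
  refine (norm_mul_le _ _).trans (mul_le_mul_of_nonneg_right ?_ (norm_nonneg _))
  calc ‖∑ i ∈ range n, a ^ i * b ^ (n - 1 - i)‖
      ≤ ∑ i ∈ range n, ‖a‖ ^ i * ‖b‖ ^ (n - 1 - i) := by
        refine (norm_sum_le _ _).trans (sum_le_sum fun i _ => ?_)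
        exact (norm_mul_le _ _).trans (mul_le_mul (norm_pow_le a i) (norm_pow_le b _)
          (norm_nonneg _) (by positivity))
    _ ≤ ∑ i ∈ range n, ρ ^ (n - 1) := by
        refine sum_le_sum fun i hi => ?_
        have hi : i ≤ n - 1 := Nat.le_sub_one_of_lt (mem_range.mp hi)
        have hρ : 0 ≤ ρ := (norm_nonneg a).trans ha
        calc ‖a‖ ^ i * ‖b‖ ^ (n - 1 - i) ≤ ρ ^ i * ρ ^ (n - 1 - i) := by gcongr
          _ = ρ ^ (n - 1) := by rw [← pow_add, Nat.add_sub_cancel' hi]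
    _ = n * ρ ^ (n - 1) := by rw [sum_const, card_range, nsmul_eq_mul]

theorem Complex.I_pow_of_two_mod_four {n : ℕ} (h : n % 4 = 2) : I ^ n = -1 := by
  rw [I_pow_eq_pow_mod, h, I_sq]

theorem pow_lt_mul_pow_pred_mul {x ρ : ℝ} {n : ℕ} (hx : 0 < x) (hxρ : x ≤ ρ) (hn : 1 < n) :
    x ^ n < n * ρ ^ (n - 1) * x := by
  calc x ^ n = x ^ (n - 1) * x := by rw [← pow_succ, Nat.sub_add_cancel hn.le]
    _ ≤ ρ ^ (n - 1) * x := by gcongr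
    _ < n * ρ ^ (n - 1) * x := by
      have : (1 : ℝ) < n := by exact_mod_cast hn
      have : 0 < ρ ^ (n - 1) * x := by have := hx.trans_le hxρ; positivity
      nlinarith

theorem stmt_1_general (z : ℂ) (hz : z ≠ 0) (ρ : ℝ) (ℓ : ℕ)
    (heven : Even ℓ) (hndiv : ¬ (4 ∣ ℓ))
    (hre : 0 ≤ z.re) (habs : ‖z‖ ≤ ρ) :
    (z ^ ℓ).re < ℓ * ρ ^ (ℓ - 1) * z.re := by
  have hℓ : ℓ % 4 = 2 := by obtain ⟨m, rfl⟩ := heven; omega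
  set w : ℂ := z.im * I
  have hzw : z - w = z.re := by apply Complex.ext <;> simp [w]
  have hw : ‖w‖ ≤ ρ := by simpa [w] using (abs_im_le_norm z).trans habs
  have hwℓ : (w ^ ℓ).re = -z.im ^ ℓ := by
    simp [w, mul_pow, I_pow_of_two_mod_four hℓ, ← ofReal_pow]
  have hbound : (z ^ ℓ).re ≤ -z.im ^ ℓ + ℓ * ρ ^ (ℓ - 1) * z.re :=
    calc (z ^ ℓ).re = (w ^ ℓ).re + (z ^ ℓ - w ^ ℓ).re := by simp
      _ ≤ (w ^ ℓ).re + ‖z ^ ℓ - w ^ ℓ‖ := by gcongr; exact re_le_norm _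
      _ ≤ -z.im ^ ℓ + ℓ * ρ ^ (ℓ - 1) * z.re := by
        rw [hwℓ]
        gcongr
        simpa [hzw, abs_of_nonneg hre] using norm_pow_sub_pow_le ℓ habs hw
  rcases eq_or_ne z.im 0 with him | him
  · have hz_re : z = z.re := Complex.ext rfl him
    have hx : 0 < z.re := hre.lt_of_ne fun h => hz (by rw [hz_re, ← h, ofReal_zero])
    rw [hz_re, ← ofReal_pow, ofReal_re]
    exact pow_lt_mul_pow_pred_mul hx ((re_le_norm z).trans habs) (by omega)
  · have : 0 < z.im ^ ℓ := (heven.pow_pos_iff (by omega)).mpr him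
    linarith

theorem stmt_1 (z : ℂ) (hz : z ≠ 0) (ρ : ℝ) (ℓ : ℕ) (hℓ : 6 ≤ ℓ)
    (heven : Even ℓ) (hndiv : ¬ (4 ∣ ℓ))
    (hρ : 0 < ρ) (hre : 0 ≤ z.re) (habs : ‖z‖ ≤ ρ) :
    (z ^ ℓ).re < ℓ * ρ ^ (ℓ - 1) * z.re :=
  stmt_1_general z hz ρ ℓ heven hndiv hre habs
end

section
/- Let s₁,…,s_k be positive reals and x₁ ≥ x₂ ≥ ⋯ ≥ x_k ≥ 0 reals such that for every m ∈ [k], x₁+⋯+x_m ≤ Σ_{i=1}^k min(i,m)·s_i. Then Σ_{i=1}^k x_i² ≤ Σ_{i=1}^k (s_i + s_{i+1} + ⋯ + s_k)², with equality if and only if x_i = s_i + s_{i+1} + ⋯ + s_k for all i ∈ [k]. -/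
lemma abel_id (k : ℕ) (u v : ℕ → ℝ) :
    ∑ i ∈ Finset.range k, u i * v i =
      (∑ m ∈ Finset.range k, (u m - u (m+1)) * ∑ i ∈ Finset.range (m+1), v i)
        + u k * ∑ i ∈ Finset.range k, v i := by
  induction k with
  | zero => simp
  | succ n ih =>
      rw [Finset.sum_range_succ, Finset.sum_range_succ
        (f := fun m => (u m - u (m+1)) * ∑ i ∈ Finset.range (m+1), v i), ih,
        Finset.sum_range_succ (f := v)]
      ring

lemma sum_ite_le {k : ℕ} (m : Fin k) (f : Fin k → ℝ) :
    ∑ i : Fin k, (if i ≤ m then f i else 0) = ∑ i ∈ Finset.Iic m, f i := by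
  rw [← Finset.sum_filter]
  refine Finset.sum_congr ?_ fun _ _ => rfl
  ext a; simp

lemma sum_ite_ge {k : ℕ} (m : Fin k) (f : Fin k → ℝ) :
    ∑ i : Fin k, (if m ≤ i then f i else 0) = ∑ i ∈ Finset.Ici m, f i := by
  rw [← Finset.sum_filter]
  refine Finset.sum_congr ?_ fun _ _ => rfl
  ext a; simp

lemma hys_aux (k : ℕ) (s : Fin k → ℝ) (m : Fin k) :
    ∑ i : Fin k, ((min ((i : ℕ) + 1) ((m : ℕ) + 1) : ℕ) : ℝ) * s i
      = ∑ j ∈ Finset.Iic m, ∑ i ∈ Finset.Ici j, s i := by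
  have step : ∑ j ∈ Finset.Iic m, ∑ i ∈ Finset.Ici j, s i
      = ∑ j ∈ Finset.Iic m, ∑ i : Fin k, (if j ≤ i then s i else 0) :=
    Finset.sum_congr rfl fun j _ => (sum_ite_ge j s).symm
  rw [step, Finset.sum_comm]
  apply Finset.sum_congr rfl
  intro i _
  rw [show ((Finset.Iic m : Finset (Fin k)).sum fun j => if j ≤ i then s i else 0)
      = ∑ j ∈ (Finset.Iic m).filter (fun j => j ≤ i), s i from (Finset.sum_filter _ _).symm]
  have hfil : (Finset.Iic m).filter (fun j => j ≤ i) = Finset.Iic (min m i) := by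
    ext a; simp [le_min_iff]
  rw [hfil, Finset.sum_const, Fin.card_Iic]
  have h1 : ((min m i : Fin k) : ℕ) = min (m : ℕ) (i : ℕ) := by
    rcases le_total m i with h | h
    · rw [min_eq_left h, min_eq_left (Fin.le_iff_val_le_val.mp h)]
    · rw [min_eq_right h, min_eq_right (Fin.le_iff_val_le_val.mp h)]
  rw [h1]
  have h2 : min ((i : ℕ) + 1) ((m : ℕ) + 1) = min (m : ℕ) (i : ℕ) + 1 := by omega
  rw [h2]
  set n := min (m : ℕ) (i : ℕ) with hn
  simp only [nsmul_eq_mul]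

theorem stmt_3 (k : ℕ) (s x : Fin k → ℝ)
    (hs : ∀ i, 0 < s i)
    (hx_mono : ∀ i j : Fin k, i ≤ j → x j ≤ x i)
    (hx_nonneg : ∀ i, 0 ≤ x i)
    (hineq : ∀ m : Fin k,
      ∑ i ∈ Finset.Iic m, x i ≤
        ∑ i : Fin k, ((min ((i : ℕ) + 1) ((m : ℕ) + 1) : ℕ) : ℝ) * s i) :
    (∑ i : Fin k, (x i) ^ 2 ≤ ∑ i : Fin k, (∑ j ∈ Finset.Ici i, s j) ^ 2) ∧
      ((∑ i : Fin k, (x i) ^ 2 = ∑ i : Fin k, (∑ j ∈ Finset.Ici i, s j) ^ 2) ↔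
        ∀ i : Fin k, x i = ∑ j ∈ Finset.Ici i, s j) := by
  classical
  set y : Fin k → ℝ := fun i => ∑ j ∈ Finset.Ici i, s j with hy
  have hD : ∀ m : Fin k, 0 ≤ ∑ i ∈ Finset.Iic m, (y i - x i) := by
    intro m
    have h := hineq m
    rw [hys_aux k s m] at h
    rw [Finset.sum_sub_distrib]
    have : ∑ j ∈ Finset.Iic m, y j = ∑ j ∈ Finset.Iic m, ∑ i ∈ Finset.Ici j, s i := rfl
    rw [this]
    linarith
  set X : ℕ → ℝ := fun n => if h : n < k then x ⟨n, h⟩ else 0 with hX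
  set V : ℕ → ℝ := fun n => if h : n < k then y ⟨n, h⟩ - x ⟨n, h⟩ else 0 with hV
  have key : 0 ≤ ∑ i : Fin k, x i * (y i - x i) := by
    have h1 : ∑ i : Fin k, x i * (y i - x i) = ∑ i ∈ Finset.range k, X i * V i := by
      rw [← Fin.sum_univ_eq_sum_range (fun n => X n * V n) k]
      apply Finset.sum_congr rfl
      intro i _
      simp [hX, hV, i.isLt]
    rw [h1, abel_id k X V]
    have hXk : X k = 0 := by simp [hX]
    rw [hXk, zero_mul, add_zero]
    apply Finset.sum_nonneg
    intro m hm
    rw [Finset.mem_range] at hm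
    apply mul_nonneg
    · by_cases h : m + 1 < k
      · have := hx_mono ⟨m, hm⟩ ⟨m+1, h⟩ (by simp [Fin.le_iff_val_le_val])
        simp only [hX, dif_pos hm, dif_pos h]
        linarith
      · simp only [hX, dif_pos hm, dif_neg h]
        simpa using hx_nonneg ⟨m, hm⟩
    · have hsum : ∑ i ∈ Finset.range (m+1), V i
          = ∑ i ∈ Finset.Iic (⟨m, hm⟩ : Fin k), (y i - x i) := by
        have e1 : ∑ i : Fin k, (if i ≤ (⟨m, hm⟩ : Fin k) then y i - x i else 0)
            = ∑ n ∈ Finset.range k, (if n ≤ m then V n else 0) := by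
          rw [← Fin.sum_univ_eq_sum_range (fun n => if n ≤ m then V n else 0) k]
          apply Finset.sum_congr rfl
          intro i _
          by_cases h : (i : ℕ) ≤ m
          · simp [h, Fin.le_iff_val_le_val, hV, i.isLt]
          · simp [h, Fin.le_iff_val_le_val]
        have e2 : Finset.filter (fun n => n ≤ m) (Finset.range k) = Finset.range (m+1) := by
          ext a; simp [Nat.lt_succ_iff]; omega
        rw [← sum_ite_le (⟨m, hm⟩ : Fin k) (fun i => y i - x i), e1,
          ← Finset.sum_filter, e2]
      rw [hsum]
      exact hD ⟨m, hm⟩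
  have hsq : 0 ≤ ∑ i : Fin k, (x i - y i) ^ 2 :=
    Finset.sum_nonneg fun i _ => sq_nonneg _
  have hexpand : ∑ i : Fin k, (x i - y i) ^ 2
      = ∑ i : Fin k, (x i)^2 - 2 * ∑ i : Fin k, x i * y i + ∑ i : Fin k, y i ^ 2 := by
    rw [Finset.mul_sum, ← Finset.sum_sub_distrib, ← Finset.sum_add_distrib]
    apply Finset.sum_congr rfl
    intro i _
    ring
  have hkey' : ∑ i : Fin k, (x i)^2 ≤ ∑ i : Fin k, x i * y i := by
    have h3 : ∑ i : Fin k, x i * (y i - x i)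
        = ∑ i : Fin k, x i * y i - ∑ i : Fin k, (x i)^2 := by
      rw [← Finset.sum_sub_distrib]
      apply Finset.sum_congr rfl
      intro i _
      ring
    rw [h3] at key
    linarith
  have hmain : ∑ i : Fin k, (x i)^2 ≤ ∑ i : Fin k, y i ^ 2 := by
    nlinarith [hsq, hkey']
  refine ⟨hmain, ⟨fun heq => ?_, fun hall => ?_⟩⟩
  · have hzero : ∑ i : Fin k, (x i - y i) ^ 2 = 0 := by
      nlinarith [hsq, hkey', heq]
    intro i
    have h4 := (Finset.sum_eq_zero_iff_of_nonneg
      (fun j _ => sq_nonneg (x j - y j))).mp hzero i (Finset.mem_univ i)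
    have h5 : x i - y i = 0 := pow_eq_zero_iff (by norm_num) |>.mp h4
    have : x i = y i := by linarith
    simpa [hy] using this
  · apply Finset.sum_congr rfl
    intro i _
    rw [hall i]
end

section
/- Let s₁,…,s_k be positive reals and x₁ ≥ x₂ ≥ ⋯ ≥ x_k ≥ 0 reals such that for every m ∈ [k], Σ_{i=1}^m x_i ≤ Σ_{i=1}^k min(i,m)·s_i. Then Σ_{i=1}^k x_i² ≤ Σ_{i=1}^k (Σ_{j=i}^k s_j)². -/
open Finset

lemma abel_le (n : ℕ) (c u v : ℕ → ℝ)
    (hc : ∀ i, i + 1 < n → c (i + 1) ≤ c i)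
    (hc0 : ∀ i, i < n → 0 ≤ c i)
    (h : ∀ m, m ≤ n → ∑ i ∈ range m, u i ≤ ∑ i ∈ range m, v i) :
    ∑ i ∈ range n, c i * u i ≤ ∑ i ∈ range n, c i * v i := by
  rcases Nat.eq_zero_or_pos n with rfl | hn
  · simp
  have hu := Finset.sum_range_by_parts c u n
  have hv := Finset.sum_range_by_parts c v n
  simp only [smul_eq_mul] at hu hv
  rw [hu, hv]
  have h1 : c (n - 1) * ∑ i ∈ range n, u i ≤ c (n - 1) * ∑ i ∈ range n, v i := by
    apply mul_le_mul_of_nonneg_left (h n le_rfl)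
    exact hc0 (n - 1) (Nat.sub_lt hn one_pos)
  have h2 : ∑ i ∈ range (n - 1), (c (i + 1) - c i) * ∑ j ∈ range (i + 1), v j ≤
      ∑ i ∈ range (n - 1), (c (i + 1) - c i) * ∑ j ∈ range (i + 1), u j := by
    apply Finset.sum_le_sum
    intro i hi
    rw [Finset.mem_range] at hi
    have hi' : i + 1 < n := by omega
    apply mul_le_mul_of_nonpos_left (h (i + 1) (by omega))
    linarith [hc i hi']
  linarith

lemma sum_Iic_fin (k : ℕ) (f : Fin k → ℝ) (m : Fin k) :
    ∑ i ∈ Finset.Iic m, f i =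
      ∑ i ∈ range ((m : ℕ) + 1), (if h : i < k then f ⟨i, h⟩ else 0) := by
  refine Finset.sum_nbij' (i := fun i => (i : ℕ))
    (j := fun i => if h : i < k then (⟨i, h⟩ : Fin k) else m) ?_ ?_ ?_ ?_ ?_
  · intro a ha; simp only [Finset.mem_Iic] at ha
    simp only [Finset.mem_range]; omega
  · intro a ha
    simp only [Finset.mem_range] at ha
    have h : a < k := lt_of_lt_of_le ha m.2
    simp only [h, dif_pos, Finset.mem_Iic]
    exact Fin.mk_le_mk.mpr (by omega)
  · intro a ha; simp
  · intro a ha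
    simp only [Finset.mem_range] at ha
    have h : a < k := lt_of_lt_of_le ha m.2
    simp [h]
  · intro a ha
    have h : (a : ℕ) < k := a.2
    simp [h]

theorem stmt_4 (k : ℕ) (s x : Fin k → ℝ)
    (hs : ∀ i, 0 < s i)
    (hx_mono : ∀ i j : Fin k, i ≤ j → x j ≤ x i)
    (hx_nonneg : ∀ i, 0 ≤ x i)
    (hineq : ∀ m : Fin k,
      ∑ i ∈ Finset.Iic m, x i ≤
        ∑ i : Fin k, ((min ((i : ℕ) + 1) ((m : ℕ) + 1) : ℕ) : ℝ) * s i) :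
    ∑ i : Fin k, (x i) ^ 2 ≤ ∑ i : Fin k, (∑ j ∈ Finset.Ici i, s j) ^ 2 := by
  classical
  set y : Fin k → ℝ := fun i => ∑ j ∈ Finset.Ici i, s j with hy
  -- partial sums of y equal the RHS of hineq
  have hysum : ∀ m : Fin k, ∑ i ∈ Finset.Iic m, y i =
      ∑ i : Fin k, ((min ((i : ℕ) + 1) ((m : ℕ) + 1) : ℕ) : ℝ) * s i := by
    intro m
    have h1 : ∀ i : Fin k, y i = ∑ j : Fin k, if i ≤ j then s j else 0 := by
      intro i
      have hset : Finset.Ici i = Finset.filter (fun j => i ≤ j) Finset.univ := by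
        ext j; simp
      show ∑ j ∈ Finset.Ici i, s j = _
      rw [hset, Finset.sum_filter]
    simp_rw [h1]
    rw [Finset.sum_comm]
    refine Finset.sum_congr rfl fun j _ => ?_
    rw [Finset.sum_ite, Finset.sum_const, Finset.sum_const_zero, add_zero]
    have hfil : Finset.filter (fun i => i ≤ j) (Finset.Iic m) = Finset.Iic (min m j) := by
      ext a; simp [le_min_iff, and_comm]
    rw [hfil, Fin.card_Iic]
    have hmin : ((min m j : Fin k) : ℕ) = min (m : ℕ) (j : ℕ) := rfl
    rw [hmin]
    have : min ((j : ℕ) + 1) ((m : ℕ) + 1) = min (m : ℕ) (j : ℕ) + 1 := by omega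
    rw [this]
    simp [nsmul_eq_mul]
  have hpart : ∀ m : Fin k, ∑ i ∈ Finset.Iic m, x i ≤ ∑ i ∈ Finset.Iic m, y i :=
    fun m => (hineq m).trans_eq (hysum m).symm
  -- extend to ℕ
  set x' : ℕ → ℝ := fun i => if h : i < k then x ⟨i, h⟩ else 0 with hx'
  set y' : ℕ → ℝ := fun i => if h : i < k then y ⟨i, h⟩ else 0 with hy'
  have hpart' : ∀ m, m ≤ k → ∑ i ∈ range m, x' i ≤ ∑ i ∈ range m, y' i := by
    intro m hm
    rcases Nat.eq_zero_or_pos m with rfl | hm0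
    · simp
    obtain ⟨n, rfl⟩ : ∃ n, m = n + 1 := ⟨m - 1, by omega⟩
    have hn : n < k := by omega
    have e1 := sum_Iic_fin k x ⟨n, hn⟩
    have e2 := sum_Iic_fin k y ⟨n, hn⟩
    simp only at e1 e2
    rw [← e1, ← e2]
    exact hpart ⟨n, hn⟩
  have key : ∑ i ∈ range k, x' i * x' i ≤ ∑ i ∈ range k, x' i * y' i := by
    apply abel_le
    · intro i hi
      have h1 : i < k := by omega
      simp only [hx', hi, h1, dif_pos]
      exact hx_mono ⟨i, h1⟩ ⟨i + 1, hi⟩ (by simp [Fin.le_def])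
    · intro i hi
      simp only [hx', hi, dif_pos]
      exact hx_nonneg _
    · exact hpart'
  have hxc : ∀ i : Fin k, x' (i : ℕ) = x i := by
    intro i; simp [hx', i.2]
  have hyc : ∀ i : Fin k, y' (i : ℕ) = y i := by
    intro i; simp [hy', i.2]
  have key2 : ∑ i : Fin k, x i ^ 2 ≤ ∑ i : Fin k, x i * y i := by
    have e1 : ∑ i : Fin k, x' (i : ℕ) * x' (i : ℕ) = ∑ i ∈ range k, x' i * x' i :=
      Fin.sum_univ_eq_sum_range (fun i => x' i * x' i) k
    have e2 : ∑ i : Fin k, x' (i : ℕ) * y' (i : ℕ) = ∑ i ∈ range k, x' i * y' i :=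
      Fin.sum_univ_eq_sum_range (fun i => x' i * y' i) k
    calc ∑ i : Fin k, x i ^ 2 = ∑ i : Fin k, x' (i : ℕ) * x' (i : ℕ) := by
          refine Finset.sum_congr rfl fun i _ => ?_; rw [hxc, sq]
      _ ≤ ∑ i : Fin k, x' (i : ℕ) * y' (i : ℕ) := by rw [e1, e2]; exact key
      _ = ∑ i : Fin k, x i * y i := by
          refine Finset.sum_congr rfl fun i _ => ?_; rw [hxc, hyc]
  have cs := Finset.sum_mul_sq_le_sq_mul_sq Finset.univ x y
  have hA : (0:ℝ) ≤ ∑ i : Fin k, x i ^ 2 := Finset.sum_nonneg fun i _ => sq_nonneg _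
  have hB : (0:ℝ) ≤ ∑ i : Fin k, y i ^ 2 := Finset.sum_nonneg fun i _ => sq_nonneg _
  have hS : (0:ℝ) ≤ ∑ i : Fin k, x i * y i := hA.trans key2
  nlinarith [key2, cs, hA, hB, hS]
end

section
/- For every n ∈ ℕ, the spectral radius of any real skew-symmetric n×n matrix A with all entries in [-1,1] is at most the spectral radius of the matrix D_n whose entries above the diagonal are +1 and below the diagonal are -1 (and 0 on the diagonal). -/
open Matrix

/-- The spectral radius of a complex square matrix: the supremum of the absolute
values of its (complex) eigenvalues. -/
noncomputable def matrixSpectralRadius {n : ℕ} (M : Matrix (Fin n) (Fin n) ℂ) : ℝ :=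
  sSup {r : ℝ | ∃ μ ∈ spectrum ℂ M, r = ‖μ‖}

/-- The skew-symmetric matrix with `+1` above the diagonal and `-1` below. -/
def Dmat (n : ℕ) : Matrix (Fin n) (Fin n) ℝ :=
  Matrix.of fun i j => if (i : ℕ) < (j : ℕ) then 1 else if (j : ℕ) < (i : ℕ) then -1 else 0

/-!
If `A z = μ z` with `z ≠ 0`, then `μ ‖z‖² = z* A z`; as `A` is real skew-symmetric this number is
purely imaginary, with imaginary part `∑ A_jk Im(z̄_j z_k)`, so `|μ| ‖z‖² ≤ ∑ |Im(z̄_j z_k)|`.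
`D_n` attains this bound at a rearrangement `w` of `z`: replacing each `z_j` by `±z_j` moves it into
the closed upper half plane without changing `|Im(z̄_j z_k)|`, and after sorting the coordinates by
argument, `Im(w̄_j w_k) = |w_j| |w_k| sin(arg w_k - arg w_j) ≥ 0` for `j ≤ k`, so that
`w* D_n w = i ∑ |Im(w̄_j w_k)|`. Finally `|w* D_n w| ≤ ‖D_n‖ ‖w‖²`, and the operator norm of the
normal matrix `D_n` is its spectral radius.
-/

open scoped Matrix.Norms.L2Operator

section SpectralRadius

variable {n : ℕ}

lemma matrixSpectralRadius_nonneg (M : Matrix (Fin n) (Fin n) ℂ) :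
    0 ≤ matrixSpectralRadius M :=
  Real.sSup_nonneg (by rintro r ⟨μ, _, rfl⟩; positivity)

lemma norm_le_matrixSpectralRadius_of_mem_spectrum {M : Matrix (Fin n) (Fin n) ℂ} {μ : ℂ}
    (hμ : μ ∈ spectrum ℂ M) : ‖μ‖ ≤ matrixSpectralRadius M := by
  refine le_csSup (((Matrix.finite_spectrum M).image (‖·‖)).bddAbove.mono ?_) ⟨μ, hμ, rfl⟩
  rintro _ ⟨ν, hν, rfl⟩
  exact ⟨ν, hν, rfl⟩

lemma matrixSpectralRadius_le {M : Matrix (Fin n) (Fin n) ℂ} {r : ℝ} (hr : 0 ≤ r)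
    (h : ∀ μ ∈ spectrum ℂ M, ‖μ‖ ≤ r) : matrixSpectralRadius M ≤ r :=
  Real.sSup_le (by rintro _ ⟨μ, hμ, rfl⟩; exact h μ hμ) hr

lemma norm_le_matrixSpectralRadius_of_conjTranspose_eq_neg {N : Matrix (Fin n) (Fin n) ℂ}
    (hN : Nᴴ = -N) : ‖N‖ ≤ matrixSpectralRadius N := by
  cases n with
  | zero => simpa [Subsingleton.elim N 0] using matrixSpectralRadius_nonneg N
  | succ n =>
    have : IsStarNormal N := ⟨by rw [star_eq_conjTranspose, hN]; exact (Commute.refl N).neg_left⟩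
    obtain ⟨ζ, hζ, hζN⟩ := spectrum.exists_nnnorm_eq_spectralRadius N
    rw [IsStarNormal.spectralRadius_eq_nnnorm, ENNReal.coe_inj] at hζN
    calc ‖N‖ = ‖ζ‖ := congrArg NNReal.toReal hζN.symm
      _ ≤ matrixSpectralRadius N := norm_le_matrixSpectralRadius_of_mem_spectrum hζ

lemma exists_mulVec_eq_smul_of_mem_spectrum {M : Matrix (Fin n) (Fin n) ℂ} {μ : ℂ}
    (hμ : μ ∈ spectrum ℂ M) : ∃ z ≠ 0, M *ᵥ z = μ • z := by
  rw [← spectrum_toLin', ← Module.End.hasEigenvalue_iff_mem_spectrum] at hμ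
  obtain ⟨z, hz⟩ := hμ.exists_hasEigenvector
  exact ⟨z, hz.2, hz.apply_eq_smul⟩

end SpectralRadius

lemma Complex.im_star_mul_nonneg_of_arg_le {a b : ℂ} (ha : 0 ≤ a.im)
    (hab : Complex.arg a ≤ Complex.arg b) : 0 ≤ (star a * b).im := by
  have hpolar : (star a * b).im = ‖a‖ * ‖b‖ * Real.sin (Complex.arg b - Complex.arg a) := by
    rw [Real.sin_sub]
    calc (star a * b).im = a.re * b.im - a.im * b.re := by
          simp only [Complex.star_def, Complex.mul_im, Complex.conj_re, Complex.conj_im]; ring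
      _ = _ := by
          rw [← Complex.norm_mul_cos_arg a, ← Complex.norm_mul_cos_arg b,
            ← Complex.norm_mul_sin_arg a, ← Complex.norm_mul_sin_arg b]
          ring
  rw [hpolar]
  refine mul_nonneg (by positivity) (Real.sin_nonneg_of_nonneg_of_le_pi (by linarith) ?_)
  linarith [Complex.arg_nonneg_iff.mpr ha, Complex.arg_le_pi b]

section ImGram

variable {ι : Type*}

def imGram (z : ι → ℂ) (j k : ι) : ℝ := (star (z j) * z k).im

lemma imGram_swap (z : ι → ℂ) (j k : ι) : imGram z k j = -imGram z j k := by
  simp only [imGram, Complex.star_def, Complex.mul_im, Complex.conj_re, Complex.conj_im]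
  ring

lemma imGram_ofReal_mul (ε : ι → ℝ) (z : ι → ℂ) (j k : ι) :
    imGram (fun i => (ε i : ℂ) * z i) j k = ε j * ε k * imGram z j k := by
  simp only [imGram, star_mul', Complex.star_def, Complex.conj_ofReal]
  rw [mul_mul_mul_comm, ← Complex.ofReal_mul, Complex.im_ofReal_mul]

lemma conjTranspose_map_ofReal_of_transpose_eq_neg {B : Matrix ι ι ℝ} (hB : Bᵀ = -B) :
    (B.map Complex.ofReal)ᴴ = -B.map Complex.ofReal := by
  ext j k
  have hkj : B k j = -B j k := by simpa using congr_fun (congr_fun hB j) k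
  simp [hkj]

lemma exists_abs_eq_one_im_mul_nonneg (z : ι → ℂ) :
    ∃ ε : ι → ℝ, (∀ j, |ε j| = 1) ∧ ∀ j, 0 ≤ ((ε j : ℂ) * z j).im := by
  refine ⟨fun j => if (z j).im < 0 then -1 else 1, fun j => ?_, fun j => ?_⟩ <;>
    dsimp only <;> split_ifs with h
  · simp
  · simp
  · simp only [Complex.ofReal_neg, Complex.ofReal_one, neg_one_mul, Complex.neg_im]; linarith
  · simpa using h

variable [Fintype ι]

lemma norm_star_dotProduct_mulVec_le [DecidableEq ι] (M : Matrix ι ι ℂ) (w : ι → ℂ) :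
    ‖star w ⬝ᵥ M *ᵥ w‖ ≤ ‖M‖ * ∑ j, ‖w j‖ ^ 2 := by
  set w' : EuclideanSpace ℂ ι := WithLp.toLp 2 w
  calc ‖star w ⬝ᵥ M *ᵥ w‖ = ‖inner ℂ w' ((EuclideanSpace.equiv ι ℂ).symm (M *ᵥ w))‖ := by
        rw [dotProduct_comm]; rfl
    _ ≤ ‖w'‖ * (‖M‖ * ‖w'‖) :=
        (norm_inner_le_norm _ _).trans (by gcongr; exact M.l2_opNorm_mulVec w')
    _ = ‖M‖ * ∑ j, ‖w j‖ ^ 2 := by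
        rw [mul_left_comm, ← sq, PiLp.norm_sq_eq_of_L2]

lemma re_star_dotProduct_mulVec_eq_zero {N : Matrix ι ι ℂ} (hN : Nᴴ = -N) (z : ι → ℂ) :
    (star z ⬝ᵥ N *ᵥ z).re = 0 := by
  have h : star (star z ⬝ᵥ N *ᵥ z) = -(star z ⬝ᵥ N *ᵥ z) := by
    rw [← star_dotProduct, star_mulVec, ← dotProduct_mulVec, hN, neg_mulVec, dotProduct_neg]
  have := congrArg Complex.re h
  simp only [Complex.star_def, Complex.conj_re, Complex.neg_re] at this
  linarith

lemma im_star_dotProduct_map_ofReal_mulVec (B : Matrix ι ι ℝ) (z : ι → ℂ) :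
    (star z ⬝ᵥ B.map Complex.ofReal *ᵥ z).im = ∑ j, ∑ k, B j k * imGram z j k := by
  simp only [dotProduct, mulVec, Finset.mul_sum, Complex.im_sum, map_apply, Pi.star_apply]
  refine Finset.sum_congr rfl fun j _ => Finset.sum_congr rfl fun k _ => ?_
  rw [imGram, mul_left_comm, Complex.im_ofReal_mul]

lemma norm_star_dotProduct_map_ofReal_mulVec_of_transpose_eq_neg {B : Matrix ι ι ℝ}
    (hB : Bᵀ = -B) (z : ι → ℂ) :
    ‖star z ⬝ᵥ B.map Complex.ofReal *ᵥ z‖ = |∑ j, ∑ k, B j k * imGram z j k| := by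
  rw [← im_star_dotProduct_map_ofReal_mulVec, Complex.norm_eq_sqrt_sq_add_sq,
    re_star_dotProduct_mulVec_eq_zero (conjTranspose_map_ofReal_of_transpose_eq_neg hB),
    zero_pow two_ne_zero, zero_add, Real.sqrt_sq_eq_abs]

lemma norm_mul_sum_sq_le_sum_abs_imGram {B : Matrix ι ι ℝ} (hB : Bᵀ = -B)
    (hB_le : ∀ j k, |B j k| ≤ 1) {z : ι → ℂ} {μ : ℂ} (hz : B.map Complex.ofReal *ᵥ z = μ • z) :
    ‖μ‖ * ∑ j, ‖z j‖ ^ 2 ≤ ∑ j, ∑ k, |imGram z j k| := by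
  have hzz : star z ⬝ᵥ z = ((∑ j, ‖z j‖ ^ 2 : ℝ) : ℂ) := by
    simp [dotProduct, Complex.conj_mul']
  calc ‖μ‖ * ∑ j, ‖z j‖ ^ 2 = ‖star z ⬝ᵥ B.map Complex.ofReal *ᵥ z‖ := by
        rw [hz, dotProduct_smul, hzz, smul_eq_mul, norm_mul, Complex.norm_real,
          Real.norm_of_nonneg (by positivity)]
    _ = |∑ j, ∑ k, B j k * imGram z j k| :=
        norm_star_dotProduct_map_ofReal_mulVec_of_transpose_eq_neg hB z
    _ ≤ ∑ j, ∑ k, |B j k * imGram z j k| :=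
        (Finset.abs_sum_le_sum_abs _ _).trans
          (Finset.sum_le_sum fun j _ => Finset.abs_sum_le_sum_abs _ _)
    _ ≤ ∑ j, ∑ k, |imGram z j k| :=
        Finset.sum_le_sum fun j _ => Finset.sum_le_sum fun k _ => by
          rw [abs_mul]
          exact mul_le_of_le_one_left (abs_nonneg _) (hB_le j k)

end ImGram

lemma exists_imGram_nonneg_of_le {n : ℕ} (z : Fin n → ℂ) : ∃ w : Fin n → ℂ,
    ∑ j, ‖w j‖ ^ 2 = ∑ j, ‖z j‖ ^ 2 ∧
    ∑ j, ∑ k, |imGram w j k| = ∑ j, ∑ k, |imGram z j k| ∧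
    ∀ j k, j ≤ k → 0 ≤ imGram w j k := by
  obtain ⟨ε, hε, hup⟩ := exists_abs_eq_one_im_mul_nonneg z
  set u : Fin n → ℂ := fun j => (ε j : ℂ) * z j
  set σ := Tuple.sort fun j => Complex.arg (u j)
  refine ⟨u ∘ σ, ?_, ?_, fun j k hjk => ?_⟩
  · exact (Equiv.sum_comp σ fun j => ‖u j‖ ^ 2).trans (by simp [u, hε])
  · change ∑ j, ∑ k, |imGram u (σ j) (σ k)| = _
    rw [Equiv.sum_comp σ fun j => ∑ k, |imGram u j (σ k)|]
    refine Finset.sum_congr rfl fun j _ => ?_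
    rw [Equiv.sum_comp σ fun k => |imGram u j k|]
    simp only [u, imGram_ofReal_mul, abs_mul, hε, one_mul]
  · exact Complex.im_star_mul_nonneg_of_arg_le (hup _)
      (Tuple.monotone_sort (fun j => Complex.arg (u j)) hjk)

section Dmat

variable {n : ℕ} {j k : Fin n}

lemma Dmat_apply_of_lt (h : j < k) : Dmat n j k = 1 := if_pos h

lemma Dmat_apply_self : Dmat n j j = 0 := by simp [Dmat]

lemma Dmat_apply_of_gt (h : k < j) : Dmat n j k = -1 := by
  simp [Dmat, h, h.not_gt]

lemma Dmat_transpose (n : ℕ) : (Dmat n)ᵀ = -Dmat n := by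
  ext j k
  rcases lt_trichotomy j k with h | rfl | h
  · simp [Dmat_apply_of_lt h, Dmat_apply_of_gt h]
  · simp [Dmat_apply_self]
  · simp [Dmat_apply_of_lt h, Dmat_apply_of_gt h]

lemma Dmat_mul_eq_abs {g : Fin n → Fin n → ℝ} (hg_swap : ∀ j k, g k j = -g j k)
    (hg : ∀ j k, j ≤ k → 0 ≤ g j k) (j k : Fin n) : Dmat n j k * g j k = |g j k| := by
  rcases lt_trichotomy j k with h | rfl | h
  · rw [Dmat_apply_of_lt h, one_mul, abs_of_nonneg (hg j k h.le)]
  · simp [Dmat_apply_self, show g j j = 0 by linarith [hg_swap j j]]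
  · have := hg k j h.le
    rw [Dmat_apply_of_gt h, abs_of_nonpos (by linarith [hg_swap j k]), neg_one_mul]

end Dmat

lemma sum_abs_imGram_le_matrixSpectralRadius_Dmat {n : ℕ} (z : Fin n → ℂ) :
    ∑ j, ∑ k, |imGram z j k| ≤
      matrixSpectralRadius ((Dmat n).map Complex.ofReal) * ∑ j, ‖z j‖ ^ 2 := by
  obtain ⟨w, hw_norm, hw_sum, hw⟩ := exists_imGram_nonneg_of_le z
  calc ∑ j, ∑ k, |imGram z j k| = |∑ j, ∑ k, Dmat n j k * imGram w j k| := by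
        simp only [Dmat_mul_eq_abs (imGram_swap w) hw, ← hw_sum]
        exact (abs_of_nonneg (by positivity)).symm
    _ = ‖star w ⬝ᵥ (Dmat n).map Complex.ofReal *ᵥ w‖ :=
        (norm_star_dotProduct_map_ofReal_mulVec_of_transpose_eq_neg (Dmat_transpose n) w).symm
    _ ≤ ‖(Dmat n).map Complex.ofReal‖ * ∑ j, ‖w j‖ ^ 2 := norm_star_dotProduct_mulVec_le _ w
    _ ≤ matrixSpectralRadius ((Dmat n).map Complex.ofReal) * ∑ j, ‖z j‖ ^ 2 := by
        rw [hw_norm]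
        gcongr
        exact norm_le_matrixSpectralRadius_of_conjTranspose_eq_neg
          (conjTranspose_map_ofReal_of_transpose_eq_neg (Dmat_transpose n))

theorem stmt_5 (n : ℕ) (A : Matrix (Fin n) (Fin n) ℝ)
    (hskew : Aᵀ = -A) (hbound : ∀ i j, |A i j| ≤ 1) :
    matrixSpectralRadius (A.map Complex.ofReal) ≤
      matrixSpectralRadius ((Dmat n).map Complex.ofReal) := by
  refine matrixSpectralRadius_le (matrixSpectralRadius_nonneg _) fun μ hμ => ?_
  obtain ⟨z, hz0, hz⟩ := exists_mulVec_eq_smul_of_mem_spectrum hμ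
  obtain ⟨j, hj⟩ := Function.ne_iff.mp hz0
  have hpos : 0 < ∑ j, ‖z j‖ ^ 2 :=
    Finset.sum_pos' (fun _ _ => by positivity)
      ⟨j, Finset.mem_univ _, pow_pos (norm_pos_iff.mpr hj) 2⟩
  exact le_of_mul_le_mul_right ((norm_mul_sum_sq_le_sum_abs_imGram hskew hbound hz).trans
    (sum_abs_imGram_le_matrixSpectralRadius_Dmat z)) hpos
end

section
/- Let B be a real skew-symmetric n×n matrix and J_n the all-ones n×n matrix. Then trace((J_n + B)⁴) = trace(J_n⁴) + trace(B⁴) - 4n·‖Bj‖², where j is the all-ones vector. In particular trace((J_n+B)⁴) ≤ n⁴ + trace(B⁴), with equality if and only if every row of B sums to zero. -/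
open Matrix

set_option maxHeartbeats 1000000 in
theorem stmt_7 (n : ℕ) (B : Matrix (Fin n) (Fin n) ℝ) (hskew : Bᵀ = -B) :
    (Matrix.trace ((Matrix.of (fun _ _ => (1 : ℝ)) + B) ^ 4) =
        Matrix.trace ((Matrix.of (fun _ _ => (1 : ℝ)) : Matrix (Fin n) (Fin n) ℝ) ^ 4) +
          Matrix.trace (B ^ 4) -
            4 * n * ∑ i, (B.mulVec (fun _ => (1 : ℝ)) i) ^ 2) ∧
      Matrix.trace ((Matrix.of (fun _ _ => (1 : ℝ)) + B) ^ 4) ≤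
        (n : ℝ) ^ 4 + Matrix.trace (B ^ 4) ∧
      (Matrix.trace ((Matrix.of (fun _ _ => (1 : ℝ)) + B) ^ 4) =
          (n : ℝ) ^ 4 + Matrix.trace (B ^ 4) ↔ ∀ i, ∑ j, B i j = 0) := by
  set J : Matrix (Fin n) (Fin n) ℝ := Matrix.of (fun _ _ => (1:ℝ)) with hJdef
  have hJ2 : J * J = (n : ℝ) • J := by
    ext i k
    simp [Matrix.mul_apply, hJdef]
  have hJ2X : ∀ X : Matrix (Fin n) (Fin n) ℝ, J * (J * X) = (n : ℝ) • (J * X) := by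
    intro X
    rw [← mul_assoc, hJ2, Matrix.smul_mul]
  have hTrJ : ∀ A : Matrix (Fin n) (Fin n) ℝ, Matrix.trace (J * A) = ∑ i, ∑ j, A j i := by
    intro A
    simp [Matrix.trace, Matrix.mul_apply, Matrix.diag, hJdef]
  have hTrJ1 : Matrix.trace J = (n : ℝ) := by
    simp [Matrix.trace, Matrix.diag, hJdef]
  have hdsum : ∀ A : Matrix (Fin n) (Fin n) ℝ, Aᵀ = -A → (∑ i, ∑ j, A j i) = 0 := by
    intro A hA
    have hA' : ∀ i j, A j i + A i j = 0 := by
      intro i j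
      have := congrFun (congrFun hA i) j
      simp only [Matrix.transpose_apply, Matrix.neg_apply] at this
      linarith
    have h1 : (∑ i, ∑ j, (A j i + A i j)) = 0 := by simp [hA']
    have h2 : (∑ i : Fin n, ∑ j, A i j) = ∑ i, ∑ j, A j i := Finset.sum_comm
    simp only [Finset.sum_add_distrib] at h1
    linarith
  have hskew3 : (B*(B*B))ᵀ = -(B*(B*B)) := by
    simp only [Matrix.transpose_mul, hskew]
    noncomm_ring
  have hJBJ : J * B * J = 0 := by
    ext i k
    simp only [Matrix.mul_apply, hJdef, Matrix.of_apply, mul_one, one_mul, Matrix.zero_apply]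
    exact hdsum B hskew
  have hz : J * (B * J) = 0 := by rw [← mul_assoc, hJBJ]
  have hrow : ∀ k, (∑ j, B j k) = - ∑ j, B k j := by
    intro k
    have : ∀ j, B j k = - B k j := by
      intro j
      have := congrFun (congrFun hskew k) j
      simpa using this
    simp [this]
  have hTr0 : Matrix.trace (J * B) = 0 := by rw [hTrJ]; exact hdsum B hskew
  have hTr3 : Matrix.trace (J * (B * (B * B))) = 0 := by rw [hTrJ]; exact hdsum _ hskew3
  have hJB2 : Matrix.trace (J * (B*B)) = - ∑ k, (∑ j, B k j)^2 := by
    rw [hTrJ]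
    have step1 : (∑ i, ∑ j, (B*B) j i) = ∑ i, ∑ j, ∑ k, B j k * B k i := by
      simp [Matrix.mul_apply]
    rw [step1]
    have step2 : (∑ i : Fin n, ∑ j : Fin n, ∑ k : Fin n, B j k * B k i)
        = ∑ k : Fin n, (∑ j, B j k) * (∑ i, B k i) := by
      rw [Finset.sum_comm]
      have : ∀ j : Fin n, (∑ i : Fin n, ∑ k : Fin n, B j k * B k i)
          = ∑ k : Fin n, B j k * ∑ i, B k i := by
        intro j
        rw [Finset.sum_comm]
        simp [Finset.mul_sum]
      simp only [this]
      rw [Finset.sum_comm]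
      simp [Finset.sum_mul]
    rw [step2]
    simp only [hrow]
    simp [sq]
  set s : ℝ := ∑ k, (∑ j, B k j)^2 with hsdef
  -- expansion
  have e : (J + B)^4 =
      J*(J*(J*J)) + J*(J*(J*B)) + J*(J*(B*J)) + J*(J*(B*B)) +
      J*(B*(J*J)) + J*(B*(J*B)) + J*(B*(B*J)) + J*(B*(B*B)) +
      B*(J*(J*J)) + B*(J*(J*B)) + B*(J*(B*J)) + B*(J*(B*B)) +
      B*(B*(J*J)) + B*(B*(J*B)) + B*(B*(B*J)) + B*(B*(B*B)) := by
    noncomm_ring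
  have t1 : Matrix.trace (J*(J*(J*J))) = Matrix.trace (J^4) := by
    congr 1; noncomm_ring
  have hJ4 : Matrix.trace (J^4) = (n:ℝ)^4 := by
    have hw : J^4 = J*(J*(J*J)) := by noncomm_ring
    rw [hw, hJ2X, Matrix.trace_smul, hJ2X, Matrix.trace_smul, hJ2, Matrix.trace_smul, hTrJ1]
    simp [smul_eq_mul]; ring
  have t2 : Matrix.trace (J*(J*(J*B))) = 0 := by
    rw [hJ2X, Matrix.trace_smul, hJ2X, Matrix.trace_smul, hTr0]; simp
  have t3 : Matrix.trace (J*(J*(B*J))) = 0 := by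
    rw [hJ2X, hz]; simp
  have t4 : Matrix.trace (J*(J*(B*B))) = (n:ℝ) * (-s) := by
    rw [hJ2X, Matrix.trace_smul, hJB2]; simp
  have t5 : Matrix.trace (J*(B*(J*J))) = 0 := by
    rw [hJ2, mul_smul_comm, mul_smul_comm, hz]; simp
  have t6 : Matrix.trace (J*(B*(J*B))) = 0 := by
    have hw : J*(B*(J*B)) = (J*(B*J))*B := by noncomm_ring
    rw [hw, hz]; simp
  have t7 : Matrix.trace (J*(B*(B*J))) = (n:ℝ) * (-s) := by
    have hw : J*(B*(B*J)) = (J*(B*B))*J := by noncomm_ring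
    rw [hw, Matrix.trace_mul_comm, hJ2X, Matrix.trace_smul, hJB2]; simp
  have t8 : Matrix.trace (J*(B*(B*B))) = 0 := hTr3
  have hTrBJ : Matrix.trace (B * J) = 0 := by rw [Matrix.trace_mul_comm, hTr0]
  have t9 : Matrix.trace (B*(J*(J*J))) = 0 := by
    rw [hJ2X, hJ2, mul_smul_comm, mul_smul_comm, Matrix.trace_smul, Matrix.trace_smul, hTrBJ]
    simp
  have tBJB : Matrix.trace (B*(J*B)) = -s := by
    rw [Matrix.trace_mul_comm, mul_assoc, hJB2]
  have t10 : Matrix.trace (B*(J*(J*B))) = (n:ℝ) * (-s) := by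
    rw [hJ2X, mul_smul_comm, Matrix.trace_smul, tBJB]; simp
  have t11 : Matrix.trace (B*(J*(B*J))) = 0 := by
    rw [hz, mul_zero, Matrix.trace_zero]
  have t12 : Matrix.trace (B*(J*(B*B))) = 0 := by
    rw [Matrix.trace_mul_comm]
    have hw : (J*(B*B))*B = J*(B*(B*B)) := by noncomm_ring
    rw [hw, hTr3]
  have t13 : Matrix.trace (B*(B*(J*J))) = (n:ℝ) * (-s) := by
    rw [hJ2, mul_smul_comm, mul_smul_comm, Matrix.trace_smul]
    have hw : Matrix.trace (B*(B*J)) = -s := by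
      rw [Matrix.trace_mul_comm]
      have hw2 : (B*J)*B = B*(J*B) := by noncomm_ring
      rw [hw2, tBJB]
    rw [hw]; simp
  have t14 : Matrix.trace (B*(B*(J*B))) = 0 := by
    have hw : B*(B*(J*B)) = (B*B)*(J*B) := by noncomm_ring
    rw [hw, Matrix.trace_mul_comm]
    have hw2 : (J*B)*(B*B) = J*(B*(B*B)) := by noncomm_ring
    rw [hw2, hTr3]
  have t15 : Matrix.trace (B*(B*(B*J))) = 0 := by
    have hw : B*(B*(B*J)) = (B*(B*B))*J := by noncomm_ring
    rw [hw, Matrix.trace_mul_comm, hTr3]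
  have t16 : Matrix.trace (B*(B*(B*B))) = Matrix.trace (B^4) := by
    congr 1; noncomm_ring
  have key : Matrix.trace ((J + B)^4)
      = Matrix.trace (J^4) + Matrix.trace (B^4) - 4 * n * s := by
    rw [e]
    simp only [Matrix.trace_add]
    rw [t1, t2, t3, t4, t5, t6, t7, t8, t9, t10, t11, t12, t13, t14, t15, t16]
    ring
  have hs : (∑ i, (B.mulVec (fun _ => (1:ℝ)) i)^2) = s := by
    rw [hsdef]
    simp [Matrix.mulVec, dotProduct]
  have hsnn : 0 ≤ s := Finset.sum_nonneg fun i _ => sq_nonneg _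
  have hzero : (s = 0) ↔ ∀ i, ∑ j, B i j = 0 := by
    rw [hsdef]
    rw [Finset.sum_eq_zero_iff_of_nonneg fun i _ => sq_nonneg _]
    constructor
    · intro h i
      have := h i (Finset.mem_univ i)
      exact pow_eq_zero_iff (by norm_num) |>.mp this
    · intro h i _
      rw [h i]; ring
  refine ⟨by rw [key, hs], ?_, ?_⟩
  · rw [key, hJ4]
    have : 0 ≤ 4 * (n:ℝ) * s := by positivity
    linarith
  · rw [key, hJ4]
    constructor
    · intro h
      have h4 : 4 * (n:ℝ) * s = 0 := by linarith
      rcases Nat.eq_zero_or_pos n with hn | hn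
      · subst hn; exact fun i => i.elim0
      · have hn' : (0:ℝ) < n := by exact_mod_cast hn
        have : s = 0 := by
          have h4' : (4 * (n:ℝ)) * s = 0 := by linarith
          rcases mul_eq_zero.mp h4' with h' | h'
          · nlinarith
          · exact h'
        exact hzero.mp this
    · intro h
      have : s = 0 := hzero.mpr h
      rw [this]; ring
end

section
/- Let B be a real skew-symmetric n×n matrix with entries in [-1,1] and J_n the all-ones n×n matrix. Then trace((J_n + B)⁸) ≤ trace(J_n⁸) + trace(B⁸) - 2n⁵·‖Bj‖², where j is the all-ones vector. In particular trace((J_n+B)⁸) ≤ n⁸ + trace(B⁸), with equality if and only if every row of B sums to zero. -/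
open Matrix Finset

namespace Stmt8

variable {n : ℕ}

/-- powers of B applied to the all-ones vector -/
def vv (B : Matrix (Fin n) (Fin n) ℝ) (a : ℕ) : Fin n → ℝ :=
  (B ^ a).mulVec (fun _ => 1)

/-- sums of entries of `vv` -/
def SS (B : Matrix (Fin n) (Fin n) ℝ) (a : ℕ) : ℝ := ∑ i, vv B a i

/-- dot products -/
def dd (B : Matrix (Fin n) (Fin n) ℝ) (a b : ℕ) : ℝ := ∑ i, vv B a i * vv B b i

lemma vv_zero (B : Matrix (Fin n) (Fin n) ℝ) : vv B 0 = (fun _ => 1) := by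
  simp [vv]

lemma vv_succ (B : Matrix (Fin n) (Fin n) ℝ) (a : ℕ) :
    vv B (a + 1) = B.mulVec (vv B a) := by
  simp [vv, pow_succ']

lemma mulVec_vv (B : Matrix (Fin n) (Fin n) ℝ) (m a : ℕ) :
    (B ^ m).mulVec (vv B a) = vv B (m + a) := by
  simp [vv, pow_add]

lemma sum_add' (x y : Fin n → ℝ) : ∑ i, (x + y) i = (∑ i, x i) + ∑ i, y i := by
  simp [Finset.sum_add_distrib]

lemma sum_smul' (c : ℝ) (x : Fin n → ℝ) : ∑ i, (c • x) i = c * ∑ i, x i := by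
  simp [Finset.mul_sum]

lemma skew_dot (B : Matrix (Fin n) (Fin n) ℝ) (hskew : Bᵀ = -B) (x y : Fin n → ℝ) :
    ∑ i, (B.mulVec x) i * y i = -∑ i, x i * (B.mulVec y) i := by
  have hB : ∀ i k : Fin n, B k i = -B i k := by
    intro i k
    have := congrFun (congrFun hskew k) i
    simp only [Matrix.transpose_apply, Matrix.neg_apply] at this
    linarith
  simp only [Matrix.mulVec, dotProduct, Finset.sum_mul, Finset.mul_sum]
  rw [Finset.sum_comm, ← Finset.sum_neg_distrib]
  refine Finset.sum_congr rfl fun i _ => ?_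
  rw [← Finset.sum_neg_distrib]
  refine Finset.sum_congr rfl fun k _ => ?_
  rw [hB i k]
  ring

lemma dd_symm (B : Matrix (Fin n) (Fin n) ℝ) (a b : ℕ) : dd B a b = dd B b a := by
  simp [dd, mul_comm]

lemma dd_step (B : Matrix (Fin n) (Fin n) ℝ) (hskew : Bᵀ = -B) (a b : ℕ) :
    dd B (a + 1) b = -dd B a (b + 1) := by
  simp only [dd, vv_succ]
  exact skew_dot B hskew (vv B a) (vv B b)

lemma SS_eq_dd (B : Matrix (Fin n) (Fin n) ℝ) (a : ℕ) : SS B a = dd B 0 a := by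
  simp [SS, dd, vv_zero]


variable {B : Matrix (Fin n) (Fin n) ℝ}

lemma dstep (hskew : Bᵀ = -B) (a b : ℕ) {a' : ℕ} (ha : a' = a + 1) :
    dd B a' b = -dd B a (b + 1) := by
  rw [ha]; exact dd_step B hskew a b

lemma dd01 (hskew : Bᵀ = -B) : dd B 0 1 = 0 := by
  have h1 : dd B 1 0 = -dd B 0 1 := dstep hskew 0 0 rfl
  have h2 := dd_symm B 0 1
  linarith

lemma dd12 (hskew : Bᵀ = -B) : dd B 1 2 = 0 := by
  have h1 : dd B 2 1 = -dd B 1 2 := dstep hskew 1 1 rfl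
  have h2 := dd_symm B 1 2
  linarith

lemma dd23 (hskew : Bᵀ = -B) : dd B 2 3 = 0 := by
  have h1 : dd B 3 2 = -dd B 2 3 := dstep hskew 2 2 rfl
  have h2 := dd_symm B 2 3
  linarith

lemma dd34 (hskew : Bᵀ = -B) : dd B 3 4 = 0 := by
  have h1 : dd B 4 3 = -dd B 3 4 := dstep hskew 3 3 rfl
  have h2 := dd_symm B 3 4
  linarith

lemma dd02 (hskew : Bᵀ = -B) : dd B 0 2 = -dd B 1 1 := by
  have h1 : dd B 1 1 = -dd B 0 2 := dstep hskew 0 1 rfl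
  linarith

lemma dd03 (hskew : Bᵀ = -B) : dd B 0 3 = 0 := by
  have h1 : dd B 1 2 = -dd B 0 3 := dstep hskew 0 2 rfl
  have h2 := dd12 hskew
  linarith

lemma dd13 (hskew : Bᵀ = -B) : dd B 1 3 = -dd B 2 2 := by
  have h1 : dd B 2 2 = -dd B 1 3 := dstep hskew 1 2 rfl
  linarith

lemma dd04 (hskew : Bᵀ = -B) : dd B 0 4 = dd B 2 2 := by
  have h1 : dd B 1 3 = -dd B 0 4 := dstep hskew 0 3 rfl
  have h2 := dd13 hskew
  linarith

lemma dd14 (hskew : Bᵀ = -B) : dd B 1 4 = 0 := by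
  have h1 : dd B 2 3 = -dd B 1 4 := dstep hskew 1 3 rfl
  have h2 := dd23 hskew
  linarith

lemma dd05 (hskew : Bᵀ = -B) : dd B 0 5 = 0 := by
  have h1 : dd B 1 4 = -dd B 0 5 := dstep hskew 0 4 rfl
  have h2 := dd14 hskew
  linarith

lemma dd15 (hskew : Bᵀ = -B) : dd B 1 5 = dd B 3 3 := by
  have h1 : dd B 2 4 = -dd B 1 5 := dstep hskew 1 4 rfl
  have h2 : dd B 3 3 = -dd B 2 4 := dstep hskew 2 3 rfl
  linarith

lemma dd06 (hskew : Bᵀ = -B) : dd B 0 6 = -dd B 3 3 := by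
  have h1 : dd B 1 5 = -dd B 0 6 := dstep hskew 0 5 rfl
  have h2 := dd15 hskew
  linarith

lemma dd16 (hskew : Bᵀ = -B) : dd B 1 6 = 0 := by
  have h1 : dd B 2 5 = -dd B 1 6 := dstep hskew 1 5 rfl
  have h2 : dd B 3 4 = -dd B 2 5 := dstep hskew 2 4 rfl
  have h3 := dd34 hskew
  linarith

lemma dd07 (hskew : Bᵀ = -B) : dd B 0 7 = 0 := by
  have h1 : dd B 1 6 = -dd B 0 7 := dstep hskew 0 6 rfl
  have h2 := dd16 hskew
  linarith

lemma SS0 (B : Matrix (Fin n) (Fin n) ℝ) : SS B 0 = (n : ℝ) := by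
  simp [SS, vv_zero]

lemma SS1 (hskew : Bᵀ = -B) : SS B 1 = 0 := by rw [SS_eq_dd, dd01 hskew]
lemma SS2 (hskew : Bᵀ = -B) : SS B 2 = -dd B 1 1 := by rw [SS_eq_dd, dd02 hskew]
lemma SS3 (hskew : Bᵀ = -B) : SS B 3 = 0 := by rw [SS_eq_dd, dd03 hskew]
lemma SS4 (hskew : Bᵀ = -B) : SS B 4 = dd B 2 2 := by rw [SS_eq_dd, dd04 hskew]
lemma SS5 (hskew : Bᵀ = -B) : SS B 5 = 0 := by rw [SS_eq_dd, dd05 hskew]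
lemma SS6 (hskew : Bᵀ = -B) : SS B 6 = -dd B 3 3 := by rw [SS_eq_dd, dd06 hskew]
lemma SS7 (hskew : Bᵀ = -B) : SS B 7 = 0 := by rw [SS_eq_dd, dd07 hskew]



lemma SSd (B : Matrix (Fin n) (Fin n) ℝ) (a : ℕ) : ∑ i, vv B a i = SS B a := rfl

/-- the all-ones matrix -/
def Jm (n : ℕ) : Matrix (Fin n) (Fin n) ℝ := Matrix.of fun _ _ => 1

lemma trace_mul_J (X : Matrix (Fin n) (Fin n) ℝ) :
    Matrix.trace (X * Jm n) = ∑ i, X.mulVec (fun _ => 1) i := by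
  simp [Matrix.trace, Matrix.diag, Matrix.mul_apply, Matrix.mulVec, dotProduct, Jm]

lemma J_mulVec (x : Fin n → ℝ) :
    (Jm n).mulVec x = (∑ i, x i) • (fun _ : Fin n => (1 : ℝ)) := by
  funext i
  simp [Jm, Matrix.mulVec, dotProduct]

/-- powers of J+B applied to ones -/
def uu (B : Matrix (Fin n) (Fin n) ℝ) (k : ℕ) : Fin n → ℝ :=
  ((Jm n + B) ^ k).mulVec (fun _ => 1)

lemma uu_zero (B : Matrix (Fin n) (Fin n) ℝ) : uu B 0 = (fun _ => 1) := by
  simp [uu]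

lemma uu_succ (B : Matrix (Fin n) (Fin n) ℝ) (k : ℕ) :
    uu B (k + 1) = B.mulVec (uu B k) + (∑ i, uu B k i) • (fun _ : Fin n => (1:ℝ)) := by
  have h1 : uu B (k+1) = (Jm n + B).mulVec (uu B k) := by
    rw [uu, pow_succ', ← Matrix.mulVec_mulVec]
    rfl
  rw [h1, Matrix.add_mulVec, J_mulVec, add_comm]

lemma trace_step (B : Matrix (Fin n) (Fin n) ℝ) (m k : ℕ) :
    Matrix.trace (B ^ m * (Jm n + B) ^ (k + 1)) =
      Matrix.trace (B ^ (m + 1) * (Jm n + B) ^ k) + ∑ i, (B ^ m).mulVec (uu B k) i := by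
  have hA : (Jm n + B) ^ (k + 1) = (Jm n + B) ^ k * B + (Jm n + B) ^ k * Jm n := by
    rw [pow_succ, mul_add, add_comm]
  rw [hA, mul_add, Matrix.trace_add]
  have e1 : Matrix.trace (B ^ m * ((Jm n + B) ^ k * B)) = Matrix.trace (B ^ (m+1) * (Jm n + B) ^ k) := by
    rw [← Matrix.mul_assoc, Matrix.trace_mul_comm, ← Matrix.mul_assoc, ← pow_succ']
  have e2 : Matrix.trace (B ^ m * ((Jm n + B) ^ k * Jm n)) = ∑ i, (B ^ m).mulVec (uu B k) i := by
    rw [← Matrix.mul_assoc, trace_mul_J]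
    have h2 : (B ^ m * (Jm n + B) ^ k).mulVec (fun _ => (1:ℝ)) = (B ^ m).mulVec (uu B k) := by
      rw [← Matrix.mulVec_mulVec]
      rfl
    simp only [h2]
  rw [e1, e2]


lemma uu1 (B : Matrix (Fin n) (Fin n) ℝ) : uu B 1 = vv B 1 + (n:ℝ) • vv B 0 := by
  have h : uu B 1 = B.mulVec (uu B 0) + (∑ i, uu B 0 i) • (fun _ : Fin n => (1:ℝ)) := uu_succ B 0
  have hs : (∑ i, uu B 0 i) = (n:ℝ) := by simp [uu_zero]
  rw [h, hs, uu_zero]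
  rw [show (fun _ : Fin n => (1:ℝ)) = vv B 0 from (vv_zero B).symm]
  rw [show B.mulVec (vv B 0) = vv B 1 from (vv_succ B 0).symm]

lemma su1 (hskew : Bᵀ = -B) : ∑ i, uu B 1 i = ((n:ℝ)^2) := by
  simp only [uu1, sum_add', sum_smul', SSd, SS0, SS1 hskew, SS2 hskew, SS3 hskew, SS4 hskew, SS5 hskew, SS6 hskew, SS7 hskew]
  ring

lemma uu2 (hskew : Bᵀ = -B) : uu B 2 = vv B 2 + (n:ℝ) • vv B 1 + ((n:ℝ)^2) • vv B 0 := by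
  have h : uu B 2 = B.mulVec (uu B 1) + (∑ i, uu B 1 i) • (fun _ : Fin n => (1:ℝ)) := uu_succ B 1
  rw [h, su1 hskew, uu1]
  simp only [Matrix.mulVec_add, Matrix.mulVec_smul]
  rw [show (fun _ : Fin n => (1:ℝ)) = vv B 0 from (vv_zero B).symm]
  rw [show B.mulVec (vv B 1) = vv B 2 from (vv_succ B 1).symm]
  rw [show B.mulVec (vv B 0) = vv B 1 from (vv_succ B 0).symm]

lemma su2 (hskew : Bᵀ = -B) : ∑ i, uu B 2 i = ((n:ℝ)^3 - dd B 1 1) := by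
  simp only [uu2 hskew, sum_add', sum_smul', SSd, SS0, SS1 hskew, SS2 hskew, SS3 hskew, SS4 hskew, SS5 hskew, SS6 hskew, SS7 hskew]
  ring

lemma uu3 (hskew : Bᵀ = -B) : uu B 3 = vv B 3 + (n:ℝ) • vv B 2 + ((n:ℝ)^2) • vv B 1 + ((n:ℝ)^3 - dd B 1 1) • vv B 0 := by
  have h : uu B 3 = B.mulVec (uu B 2) + (∑ i, uu B 2 i) • (fun _ : Fin n => (1:ℝ)) := uu_succ B 2
  rw [h, su2 hskew, uu2 hskew]
  simp only [Matrix.mulVec_add, Matrix.mulVec_smul]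
  rw [show (fun _ : Fin n => (1:ℝ)) = vv B 0 from (vv_zero B).symm]
  rw [show B.mulVec (vv B 2) = vv B 3 from (vv_succ B 2).symm]
  rw [show B.mulVec (vv B 1) = vv B 2 from (vv_succ B 1).symm]
  rw [show B.mulVec (vv B 0) = vv B 1 from (vv_succ B 0).symm]

lemma su3 (hskew : Bᵀ = -B) : ∑ i, uu B 3 i = ((n:ℝ)^4 - 2*(n:ℝ)*dd B 1 1) := by
  simp only [uu3 hskew, sum_add', sum_smul', SSd, SS0, SS1 hskew, SS2 hskew, SS3 hskew, SS4 hskew, SS5 hskew, SS6 hskew, SS7 hskew]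
  ring

lemma uu4 (hskew : Bᵀ = -B) : uu B 4 = vv B 4 + (n:ℝ) • vv B 3 + ((n:ℝ)^2) • vv B 2 + ((n:ℝ)^3 - dd B 1 1) • vv B 1 + ((n:ℝ)^4 - 2*(n:ℝ)*dd B 1 1) • vv B 0 := by
  have h : uu B 4 = B.mulVec (uu B 3) + (∑ i, uu B 3 i) • (fun _ : Fin n => (1:ℝ)) := uu_succ B 3
  rw [h, su3 hskew, uu3 hskew]
  simp only [Matrix.mulVec_add, Matrix.mulVec_smul]
  rw [show (fun _ : Fin n => (1:ℝ)) = vv B 0 from (vv_zero B).symm]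
  rw [show B.mulVec (vv B 3) = vv B 4 from (vv_succ B 3).symm]
  rw [show B.mulVec (vv B 2) = vv B 3 from (vv_succ B 2).symm]
  rw [show B.mulVec (vv B 1) = vv B 2 from (vv_succ B 1).symm]
  rw [show B.mulVec (vv B 0) = vv B 1 from (vv_succ B 0).symm]

lemma su4 (hskew : Bᵀ = -B) : ∑ i, uu B 4 i = ((n:ℝ)^5 - 3*(n:ℝ)^2*dd B 1 1 + dd B 2 2) := by
  simp only [uu4 hskew, sum_add', sum_smul', SSd, SS0, SS1 hskew, SS2 hskew, SS3 hskew, SS4 hskew, SS5 hskew, SS6 hskew, SS7 hskew]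
  ring

lemma uu5 (hskew : Bᵀ = -B) : uu B 5 = vv B 5 + (n:ℝ) • vv B 4 + ((n:ℝ)^2) • vv B 3 + ((n:ℝ)^3 - dd B 1 1) • vv B 2 + ((n:ℝ)^4 - 2*(n:ℝ)*dd B 1 1) • vv B 1 + ((n:ℝ)^5 - 3*(n:ℝ)^2*dd B 1 1 + dd B 2 2) • vv B 0 := by
  have h : uu B 5 = B.mulVec (uu B 4) + (∑ i, uu B 4 i) • (fun _ : Fin n => (1:ℝ)) := uu_succ B 4
  rw [h, su4 hskew, uu4 hskew]
  simp only [Matrix.mulVec_add, Matrix.mulVec_smul]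
  rw [show (fun _ : Fin n => (1:ℝ)) = vv B 0 from (vv_zero B).symm]
  rw [show B.mulVec (vv B 4) = vv B 5 from (vv_succ B 4).symm]
  rw [show B.mulVec (vv B 3) = vv B 4 from (vv_succ B 3).symm]
  rw [show B.mulVec (vv B 2) = vv B 3 from (vv_succ B 2).symm]
  rw [show B.mulVec (vv B 1) = vv B 2 from (vv_succ B 1).symm]
  rw [show B.mulVec (vv B 0) = vv B 1 from (vv_succ B 0).symm]

lemma su5 (hskew : Bᵀ = -B) : ∑ i, uu B 5 i = ((n:ℝ)^6 - 4*(n:ℝ)^3*dd B 1 1 + 2*(n:ℝ)*dd B 2 2 + dd B 1 1 ^ 2) := by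
  simp only [uu5 hskew, sum_add', sum_smul', SSd, SS0, SS1 hskew, SS2 hskew, SS3 hskew, SS4 hskew, SS5 hskew, SS6 hskew, SS7 hskew]
  ring

lemma uu6 (hskew : Bᵀ = -B) : uu B 6 = vv B 6 + (n:ℝ) • vv B 5 + ((n:ℝ)^2) • vv B 4 + ((n:ℝ)^3 - dd B 1 1) • vv B 3 + ((n:ℝ)^4 - 2*(n:ℝ)*dd B 1 1) • vv B 2 + ((n:ℝ)^5 - 3*(n:ℝ)^2*dd B 1 1 + dd B 2 2) • vv B 1 + ((n:ℝ)^6 - 4*(n:ℝ)^3*dd B 1 1 + 2*(n:ℝ)*dd B 2 2 + dd B 1 1 ^ 2) • vv B 0 := by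
  have h : uu B 6 = B.mulVec (uu B 5) + (∑ i, uu B 5 i) • (fun _ : Fin n => (1:ℝ)) := uu_succ B 5
  rw [h, su5 hskew, uu5 hskew]
  simp only [Matrix.mulVec_add, Matrix.mulVec_smul]
  rw [show (fun _ : Fin n => (1:ℝ)) = vv B 0 from (vv_zero B).symm]
  rw [show B.mulVec (vv B 5) = vv B 6 from (vv_succ B 5).symm]
  rw [show B.mulVec (vv B 4) = vv B 5 from (vv_succ B 4).symm]
  rw [show B.mulVec (vv B 3) = vv B 4 from (vv_succ B 3).symm]
  rw [show B.mulVec (vv B 2) = vv B 3 from (vv_succ B 2).symm]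
  rw [show B.mulVec (vv B 1) = vv B 2 from (vv_succ B 1).symm]
  rw [show B.mulVec (vv B 0) = vv B 1 from (vv_succ B 0).symm]

lemma su6 (hskew : Bᵀ = -B) : ∑ i, uu B 6 i = ((n:ℝ)^7 - 5*(n:ℝ)^4*dd B 1 1 + 3*(n:ℝ)^2*dd B 2 2 + 3*(n:ℝ)*dd B 1 1 ^ 2 - dd B 3 3) := by
  simp only [uu6 hskew, sum_add', sum_smul', SSd, SS0, SS1 hskew, SS2 hskew, SS3 hskew, SS4 hskew, SS5 hskew, SS6 hskew, SS7 hskew]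
  ring

lemma uu7 (hskew : Bᵀ = -B) : uu B 7 = vv B 7 + (n:ℝ) • vv B 6 + ((n:ℝ)^2) • vv B 5 + ((n:ℝ)^3 - dd B 1 1) • vv B 4 + ((n:ℝ)^4 - 2*(n:ℝ)*dd B 1 1) • vv B 3 + ((n:ℝ)^5 - 3*(n:ℝ)^2*dd B 1 1 + dd B 2 2) • vv B 2 + ((n:ℝ)^6 - 4*(n:ℝ)^3*dd B 1 1 + 2*(n:ℝ)*dd B 2 2 + dd B 1 1 ^ 2) • vv B 1 + ((n:ℝ)^7 - 5*(n:ℝ)^4*dd B 1 1 + 3*(n:ℝ)^2*dd B 2 2 + 3*(n:ℝ)*dd B 1 1 ^ 2 - dd B 3 3) • vv B 0 := by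
  have h : uu B 7 = B.mulVec (uu B 6) + (∑ i, uu B 6 i) • (fun _ : Fin n => (1:ℝ)) := uu_succ B 6
  rw [h, su6 hskew, uu6 hskew]
  simp only [Matrix.mulVec_add, Matrix.mulVec_smul]
  rw [show (fun _ : Fin n => (1:ℝ)) = vv B 0 from (vv_zero B).symm]
  rw [show B.mulVec (vv B 6) = vv B 7 from (vv_succ B 6).symm]
  rw [show B.mulVec (vv B 5) = vv B 6 from (vv_succ B 5).symm]
  rw [show B.mulVec (vv B 4) = vv B 5 from (vv_succ B 4).symm]
  rw [show B.mulVec (vv B 3) = vv B 4 from (vv_succ B 3).symm]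
  rw [show B.mulVec (vv B 2) = vv B 3 from (vv_succ B 2).symm]
  rw [show B.mulVec (vv B 1) = vv B 2 from (vv_succ B 1).symm]
  rw [show B.mulVec (vv B 0) = vv B 1 from (vv_succ B 0).symm]


lemma tval7 (hskew : Bᵀ = -B) : ∑ i, (B^7).mulVec (uu B 0) i = 0 := by
  simp only [uu_zero]
  exact SS7 hskew

lemma tval6 (hskew : Bᵀ = -B) : ∑ i, (B^6).mulVec (uu B 1) i = -(n:ℝ)*dd B 3 3 := by
  simp only [uu1, Matrix.mulVec_add, Matrix.mulVec_smul, mulVec_vv, Nat.reduceAdd,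
    sum_add', sum_smul', SSd, SS0, SS1 hskew, SS2 hskew, SS3 hskew, SS4 hskew, SS5 hskew, SS6 hskew, SS7 hskew]
  ring

lemma tval5 (hskew : Bᵀ = -B) : ∑ i, (B^5).mulVec (uu B 2) i = -(n:ℝ)*dd B 3 3 := by
  simp only [uu2 hskew, Matrix.mulVec_add, Matrix.mulVec_smul, mulVec_vv, Nat.reduceAdd,
    sum_add', sum_smul', SSd, SS0, SS1 hskew, SS2 hskew, SS3 hskew, SS4 hskew, SS5 hskew, SS6 hskew, SS7 hskew]
  ring

lemma tval4 (hskew : Bᵀ = -B) : ∑ i, (B^4).mulVec (uu B 3) i = -(n:ℝ)*dd B 3 3 + (n:ℝ)^3*dd B 2 2 - dd B 1 1*dd B 2 2 := by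
  simp only [uu3 hskew, Matrix.mulVec_add, Matrix.mulVec_smul, mulVec_vv, Nat.reduceAdd,
    sum_add', sum_smul', SSd, SS0, SS1 hskew, SS2 hskew, SS3 hskew, SS4 hskew, SS5 hskew, SS6 hskew, SS7 hskew]
  ring

lemma tval3 (hskew : Bᵀ = -B) : ∑ i, (B^3).mulVec (uu B 4) i = -(n:ℝ)*dd B 3 3 + (n:ℝ)^3*dd B 2 2 - dd B 1 1*dd B 2 2 := by
  simp only [uu4 hskew, Matrix.mulVec_add, Matrix.mulVec_smul, mulVec_vv, Nat.reduceAdd,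
    sum_add', sum_smul', SSd, SS0, SS1 hskew, SS2 hskew, SS3 hskew, SS4 hskew, SS5 hskew, SS6 hskew, SS7 hskew]
  ring

lemma tval2 (hskew : Bᵀ = -B) : ∑ i, (B^2).mulVec (uu B 5) i = -(n:ℝ)*dd B 3 3 + (n:ℝ)^3*dd B 2 2 - 2*dd B 1 1*dd B 2 2 - (n:ℝ)^5*dd B 1 1 + 3*(n:ℝ)^2*dd B 1 1^2 := by
  simp only [uu5 hskew, Matrix.mulVec_add, Matrix.mulVec_smul, mulVec_vv, Nat.reduceAdd,
    sum_add', sum_smul', SSd, SS0, SS1 hskew, SS2 hskew, SS3 hskew, SS4 hskew, SS5 hskew, SS6 hskew, SS7 hskew]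
  ring

lemma tval1 (hskew : Bᵀ = -B) : ∑ i, (B^1).mulVec (uu B 6) i = -(n:ℝ)*dd B 3 3 + (n:ℝ)^3*dd B 2 2 - 2*dd B 1 1*dd B 2 2 - (n:ℝ)^5*dd B 1 1 + 3*(n:ℝ)^2*dd B 1 1^2 := by
  simp only [uu6 hskew, Matrix.mulVec_add, Matrix.mulVec_smul, mulVec_vv, Nat.reduceAdd,
    sum_add', sum_smul', SSd, SS0, SS1 hskew, SS2 hskew, SS3 hskew, SS4 hskew, SS5 hskew, SS6 hskew, SS7 hskew]
  ring

lemma tval0 (hskew : Bᵀ = -B) : ∑ i, (B^0).mulVec (uu B 7) i = -2*(n:ℝ)*dd B 3 3 + 4*(n:ℝ)^3*dd B 2 2 - 2*dd B 1 1*dd B 2 2 - 6*(n:ℝ)^5*dd B 1 1 + 6*(n:ℝ)^2*dd B 1 1^2 + (n:ℝ)^8 := by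
  simp only [uu7 hskew, Matrix.mulVec_add, Matrix.mulVec_smul, mulVec_vv, Nat.reduceAdd,
    sum_add', sum_smul', SSd, SS0, SS1 hskew, SS2 hskew, SS3 hskew, SS4 hskew, SS5 hskew, SS6 hskew, SS7 hskew]
  ring

lemma trace_formula (B : Matrix (Fin n) (Fin n) ℝ) (hskew : Bᵀ = -B) :
    Matrix.trace ((Jm n + B) ^ 8) = Matrix.trace (B ^ 8) + (n:ℝ)^8 - 8*(n:ℝ)^5*dd B 1 1
      + 12*(n:ℝ)^2*dd B 1 1^2 + 8*(n:ℝ)^3*dd B 2 2 - 8*dd B 1 1*dd B 2 2 - 8*(n:ℝ)*dd B 3 3 := by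
  have h0 : Matrix.trace ((Jm n + B)^8) = Matrix.trace (B^0 * (Jm n + B)^8) := by rw [pow_zero, one_mul]
  have h1 : Matrix.trace (B^0 * (Jm n + B)^8) = Matrix.trace (B^1 * (Jm n + B)^7) + ∑ i, (B^0).mulVec (uu B 7) i := trace_step B 0 7
  have h2 : Matrix.trace (B^1 * (Jm n + B)^7) = Matrix.trace (B^2 * (Jm n + B)^6) + ∑ i, (B^1).mulVec (uu B 6) i := trace_step B 1 6
  have h3 : Matrix.trace (B^2 * (Jm n + B)^6) = Matrix.trace (B^3 * (Jm n + B)^5) + ∑ i, (B^2).mulVec (uu B 5) i := trace_step B 2 5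
  have h4 : Matrix.trace (B^3 * (Jm n + B)^5) = Matrix.trace (B^4 * (Jm n + B)^4) + ∑ i, (B^3).mulVec (uu B 4) i := trace_step B 3 4
  have h5 : Matrix.trace (B^4 * (Jm n + B)^4) = Matrix.trace (B^5 * (Jm n + B)^3) + ∑ i, (B^4).mulVec (uu B 3) i := trace_step B 4 3
  have h6 : Matrix.trace (B^5 * (Jm n + B)^3) = Matrix.trace (B^6 * (Jm n + B)^2) + ∑ i, (B^5).mulVec (uu B 2) i := trace_step B 5 2
  have h7 : Matrix.trace (B^6 * (Jm n + B)^2) = Matrix.trace (B^7 * (Jm n + B)^1) + ∑ i, (B^6).mulVec (uu B 1) i := trace_step B 6 1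
  have h8 : Matrix.trace (B^7 * (Jm n + B)^1) = Matrix.trace (B^8 * (Jm n + B)^0) + ∑ i, (B^7).mulVec (uu B 0) i := trace_step B 7 0
  have h9 : Matrix.trace (B^8 * (Jm n + B)^0) = Matrix.trace (B^8) := by rw [pow_zero, mul_one]
  have w0 := tval0 (B := B) hskew
  have w1 := tval1 (B := B) hskew
  have w2 := tval2 (B := B) hskew
  have w3 := tval3 (B := B) hskew
  have w4 := tval4 (B := B) hskew
  have w5 := tval5 (B := B) hskew
  have w6 := tval6 (B := B) hskew
  have w7 := tval7 (B := B) hskew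
  linear_combination h0 + h1 + h2 + h3 + h4 + h5 + h6 + h7 + h8 + h9 + w0 + w1 + w2 + w3 + w4 + w5 + w6 + w7

lemma dd_nonneg (B : Matrix (Fin n) (Fin n) ℝ) (a : ℕ) : 0 ≤ dd B a a :=
  Finset.sum_nonneg fun _ _ => mul_self_nonneg _

lemma cs_ineq (hskew : Bᵀ = -B) : dd B 2 2 ^ 2 ≤ dd B 1 1 * dd B 3 3 := by
  have h13 := dd13 hskew
  have hcs := Finset.sum_mul_sq_le_sq_mul_sq Finset.univ (vv B 1) (vv B 3)
  have e1 : ∑ i, vv B 1 i * vv B 3 i = dd B 1 3 := rfl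
  have e2 : ∑ i, vv B 1 i ^ 2 = dd B 1 1 := by simp [dd, sq]
  have e3 : ∑ i, vv B 3 i ^ 2 = dd B 3 3 := by simp [dd, sq]
  rw [e1, e2, e3, h13] at hcs
  nlinarith [hcs]

lemma p_le (B : Matrix (Fin n) (Fin n) ℝ) (hskew : Bᵀ = -B)
    (hbound : ∀ i j, |B i j| ≤ 1) : 3 * dd B 1 1 ≤ (n:ℝ)^3 := by
  have hw : vv B 1 = fun i => ∑ j, B i j := by
    funext i; simp [vv, pow_one, Matrix.mulVec, dotProduct]
  have hBsym : ∀ i j, B j i = -B i j := by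
    intro i j
    have := congrFun (congrFun hskew i) j
    simp only [Matrix.transpose_apply, Matrix.neg_apply] at this
    linarith
  have key : ∀ i j k : Fin n, B i j * B i k + B j i * B j k + B k i * B k j ≤ 1 := by
    intro i j k
    rw [hBsym i j, hBsym i k, hBsym j k]
    have h1 := abs_le.mp (hbound i j)
    have h2 := abs_le.mp (hbound i k)
    have h3 := abs_le.mp (hbound j k)
    nlinarith [mul_nonneg (mul_nonneg (by linarith : (0:ℝ) ≤ 1 + B i j) (by linarith : (0:ℝ) ≤ 1 - B i k)) (by linarith : (0:ℝ) ≤ 1 + B j k),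
      mul_nonneg (mul_nonneg (by linarith : (0:ℝ) ≤ 1 - B i j) (by linarith : (0:ℝ) ≤ 1 + B i k)) (by linarith : (0:ℝ) ≤ 1 - B j k)]
  have e1 : dd B 1 1 = ∑ i, ∑ j, ∑ k, B i j * B i k := by
    simp only [dd, hw]
    exact Finset.sum_congr rfl fun i _ => Finset.sum_mul_sum _ _ _ _
  have e2 : dd B 1 1 = ∑ i, ∑ j, ∑ k, B j i * B j k := by
    calc dd B 1 1 = ∑ j, ∑ i, ∑ k, B j i * B j k := by
          simp only [dd, hw]
          exact Finset.sum_congr rfl fun j _ => Finset.sum_mul_sum _ _ _ _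
      _ = ∑ i, ∑ j, ∑ k, B j i * B j k := Finset.sum_comm
  have e3 : dd B 1 1 = ∑ i, ∑ j, ∑ k, B k i * B k j := by
    calc dd B 1 1 = ∑ k, ∑ i, ∑ j, B k i * B k j := by
          simp only [dd, hw]
          exact Finset.sum_congr rfl fun k _ => Finset.sum_mul_sum _ _ _ _
      _ = ∑ i, ∑ k, ∑ j, B k i * B k j := Finset.sum_comm
      _ = ∑ i, ∑ j, ∑ k, B k i * B k j := Finset.sum_congr rfl fun i _ => Finset.sum_comm
  have hsplit : 3 * dd B 1 1 =
      ∑ i, ∑ j, ∑ k, (B i j * B i k + B j i * B j k + B k i * B k j) := by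
    calc 3 * dd B 1 1 = (∑ i, ∑ j, ∑ k, B i j * B i k) + (∑ i, ∑ j, ∑ k, B j i * B j k)
          + (∑ i, ∑ j, ∑ k, B k i * B k j) := by rw [← e1, ← e2, ← e3]; ring
      _ = _ := by simp only [← Finset.sum_add_distrib]
  have hbig : ∑ i, ∑ j, ∑ k, (B i j * B i k + B j i * B j k + B k i * B k j)
      ≤ ∑ _i : Fin n, ∑ _j : Fin n, ∑ _k : Fin n, (1:ℝ) := by
    refine Finset.sum_le_sum fun i _ => Finset.sum_le_sum fun j _ => Finset.sum_le_sum fun k _ => key i j k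
  have hcount : (∑ _i : Fin n, ∑ _j : Fin n, ∑ _k : Fin n, (1:ℝ)) = (n:ℝ)^3 := by
    simp [Finset.card_univ]
    ring
  linarith [hsplit, hbig, hcount]

lemma main_ineq (nn p q r : ℝ) (hp : 0 ≤ p) (hq : 0 ≤ q) (hr : 0 ≤ r)
    (h3 : 3*p ≤ nn^3) (hcs : q^2 ≤ p*r) :
    12*nn^2*p^2 + 8*nn^3*q ≤ 6*nn^5*p + 8*p*q + 8*nn*r := by
  rcases eq_or_lt_of_le hp with h|h
  · have hq0 : q = 0 := by nlinarith
    have hn3 : 0 ≤ nn^3 := by linarith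
    have hn : 0 ≤ nn := by
      by_contra hc
      push_neg at hc
      nlinarith [mul_neg_of_pos_of_neg (mul_pos_of_neg_of_neg hc hc) hc]
    rw [← h, hq0]
    nlinarith [mul_nonneg hn hr]
  · have hn : 0 < nn := by
      by_contra hc
      push_neg at hc
      have h0 : nn^3 ≤ 0 := by nlinarith [sq_nonneg nn]
      linarith
    have key : nn*p*(6*nn^5*p + 8*p*q + 8*nn*r - (12*nn^2*p^2 + 8*nn^3*q)) =
        2*(2*nn*q - nn^3*p + p^2)^2 + 8*(nn^2*(p*r - q^2))
          + 2*(p^2*((nn^3-3*p)*(2*nn^3+2*p))) + 10*p^4 := by ring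
    have hpos : 0 < nn * p := mul_pos hn h
    have hrhs : 0 ≤ 2*(2*nn*q - nn^3*p + p^2)^2 + 8*(nn^2*(p*r - q^2))
        + 2*(p^2*((nn^3-3*p)*(2*nn^3+2*p))) + 10*p^4 := by
      have a1 : 0 ≤ (2*nn*q - nn^3*p + p^2)^2 := sq_nonneg _
      have a2 : 0 ≤ nn^2*(p*r - q^2) := mul_nonneg (sq_nonneg nn) (by linarith)
      have a3 : 0 ≤ p^2*((nn^3-3*p)*(2*nn^3+2*p)) := by
        have b1 : 0 ≤ nn^3 - 3*p := by linarith
        have b2 : 0 ≤ 2*nn^3 + 2*p := by nlinarith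
        exact mul_nonneg (sq_nonneg p) (mul_nonneg b1 b2)
      have a4 : 0 ≤ p^4 := by positivity
      linarith
    by_contra hcon
    push_neg at hcon
    have hneg : nn*p*(6*nn^5*p + 8*p*q + 8*nn*r - (12*nn^2*p^2 + 8*nn^3*q)) < 0 :=
      mul_neg_of_pos_of_neg hpos (by linarith)
    linarith [key ▸ hrhs]

lemma traceJ8 : Matrix.trace ((Jm n)^8) = (n:ℝ)^8 := by
  have h2 : (Jm n) * (Jm n) = (n:ℝ) • Jm n := by
    ext i k
    simp [Jm, Matrix.mul_apply, Finset.card_univ]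
  have e2 : (Jm n)^2 = (n:ℝ) • Jm n := by rw [sq]; exact h2
  have e4 : (Jm n)^4 = ((n:ℝ)^3) • Jm n := by
    have h : (Jm n)^4 = ((Jm n)^2)^2 := by rw [← pow_mul]
    rw [h, e2, smul_pow, e2, smul_smul]
    congr 1
    try ring
  have e8 : (Jm n)^8 = ((n:ℝ)^7) • Jm n := by
    have h : (Jm n)^8 = ((Jm n)^4)^2 := by rw [← pow_mul]
    rw [h, e4, smul_pow, e2, smul_smul]
    congr 1
    try ring
  have ht : Matrix.trace (Jm n) = (n:ℝ) := by
    simp [Matrix.trace, Matrix.diag, Jm]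
  rw [e8, Matrix.trace_smul, ht, smul_eq_mul]
  ring

end Stmt8


open Stmt8

theorem stmt_8 (n : ℕ) (B : Matrix (Fin n) (Fin n) ℝ) (hskew : Bᵀ = -B)
    (hbound : ∀ i j, |B i j| ≤ 1) :
    (Matrix.trace ((Matrix.of (fun _ _ => (1 : ℝ)) + B) ^ 8) ≤
        Matrix.trace ((Matrix.of (fun _ _ => (1 : ℝ)) : Matrix (Fin n) (Fin n) ℝ) ^ 8) +
          Matrix.trace (B ^ 8) -
            2 * (n : ℝ) ^ 5 * ∑ i, (B.mulVec (fun _ => (1 : ℝ)) i) ^ 2) ∧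
      Matrix.trace ((Matrix.of (fun _ _ => (1 : ℝ)) + B) ^ 8) ≤
        (n : ℝ) ^ 8 + Matrix.trace (B ^ 8) ∧
      (Matrix.trace ((Matrix.of (fun _ _ => (1 : ℝ)) + B) ^ 8) =
          (n : ℝ) ^ 8 + Matrix.trace (B ^ 8) ↔ ∀ i, ∑ j, B i j = 0) := by
  have hJ : (Matrix.of (fun _ _ => (1 : ℝ)) : Matrix (Fin n) (Fin n) ℝ) = Jm n := rfl
  rw [hJ]
  have hform := trace_formula B hskew
  have hp : (∑ i, (B.mulVec (fun _ => (1:ℝ)) i) ^ 2) = dd B 1 1 := by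
    simp [dd, vv, pow_one, sq]
  have hp0 : 0 ≤ dd B 1 1 := dd_nonneg B 1
  have hq0 : 0 ≤ dd B 2 2 := dd_nonneg B 2
  have hr0 : 0 ≤ dd B 3 3 := dd_nonneg B 3
  have h3p := p_le B hskew hbound
  have hcs := cs_ineq hskew
  have hmain := main_ineq (n:ℝ) (dd B 1 1) (dd B 2 2) (dd B 3 3) hp0 hq0 hr0 h3p hcs
  have h5 : 0 ≤ (n:ℝ)^5 * dd B 1 1 := mul_nonneg (by positivity) hp0
  refine ⟨?_, ?_, ?_⟩
  · rw [hform, traceJ8, hp]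
    linarith [hmain]
  · rw [hform]
    linarith [hmain, h5]
  · constructor
    · intro heq
      rw [hform] at heq
      have hpz : dd B 1 1 = 0 := by
        rcases Nat.eq_zero_or_pos n with hn | hn
        · subst hn
          simp [dd]
        · have hn5 : 0 < (n:ℝ)^5 := by
            have : (0:ℝ) < n := by exact_mod_cast hn
            positivity
          have hple : dd B 1 1 ≤ 0 := by nlinarith [hmain, heq, hn5]
          linarith
      have hsum : ∑ i, vv B 1 i * vv B 1 i = 0 := hpz
      intro i
      have hz : vv B 1 i = 0 := by
        have hterm : ∀ x ∈ Finset.univ, 0 ≤ vv B 1 x * vv B 1 x := fun x _ => mul_self_nonneg _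
        have := (Finset.sum_eq_zero_iff_of_nonneg hterm).mp hsum i (Finset.mem_univ i)
        exact mul_self_eq_zero.mp this
      have hwi : vv B 1 i = ∑ j, B i j := by
        simp [vv, pow_one, Matrix.mulVec, dotProduct]
      rw [← hwi]
      exact hz
    · intro hrow
      have hv1 : vv B 1 = 0 := by
        funext i
        simp [vv, pow_one, Matrix.mulVec, dotProduct, hrow i]
      have hv2 : vv B 2 = 0 := by
        have h := vv_succ B 1
        rw [show (2:ℕ) = 1 + 1 from rfl, h, hv1, Matrix.mulVec_zero]
      have hv3 : vv B 3 = 0 := by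
        have h := vv_succ B 2
        rw [show (3:ℕ) = 2 + 1 from rfl, h, hv2, Matrix.mulVec_zero]
      have hP : dd B 1 1 = 0 := by simp [dd, hv1]
      have hQ : dd B 2 2 = 0 := by simp [dd, hv2]
      have hR : dd B 3 3 = 0 := by simp [dd, hv3]
      rw [hform, hP, hQ, hR]
      ring
end

section
/- Every eigenvalue of a complementary matrix A has nonnegative real part, the sum of the eigenvalues of A equals 1/2, and there is a positive real eigenvalue ρ of A such that the absolute value of every eigenvalue of A is at most ρ. -/
/-!
`A + Aᵀ = J / n` is positive semidefinite, and for an eigenpair `(μ, v)` of `A` one has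
`v* (A + Aᵀ) v = 2 Re μ ‖v‖²`, so `Re μ ≥ 0`. The diagonal entries of `A` are `1 / (2n)`, so the
trace, i.e. the sum of the eigenvalues, is `1 / 2`.

The Perron root comes from the Collatz–Wielandt argument. For a positive matrix `M`, the largest `t`
with `t u ≤ M u` for some probability vector `u` is attained (the simplex is compact), and for such
a `u` the inequality is an equality: otherwise applying `M` makes it strict in every coordinate, and
`M u` would witness a larger `t`. A nonnegative matrix is a limit of positive ones, and compactness
of the simplex passes the eigenpairs to the limit. Any eigenpair `(μ, v)` gives `|μ| |v| ≤ M |v|`,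
so `|μ|` is bounded by that root, and so is every diagonal entry `A i i = 1 / (2n) > 0`.
-/

open Matrix Finset Filter Topology ComplexOrder

namespace Matrix

variable {ι : Type*}

theorem exists_seq_pos_tendsto_of_nonneg {M : Matrix ι ι ℝ} (hM : ∀ i j, 0 ≤ M i j) :
    ∃ P : ℕ → Matrix ι ι ℝ, (∀ k i j, 0 < P k i j ∧ M i j ≤ P k i j ∧ P k i j ≤ P 0 i j) ∧
      Tendsto P atTop (𝓝 M) := by
  refine ⟨fun k => M + (1 / ((k : ℝ) + 1)) • of fun _ _ => 1, fun k i j => ?_, ?_⟩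
  · have hε : 0 < 1 / ((k : ℝ) + 1) := by positivity
    have hε₁ : 1 / ((k : ℝ) + 1) ≤ 1 :=
      div_le_one_of_le₀ (by linarith [k.cast_nonneg (α := ℝ)]) (by positivity)
    simp only [add_apply, smul_apply, of_apply, smul_eq_mul, mul_one, CharP.cast_eq_zero,
      zero_add, div_one]
    exact ⟨by linarith [hM i j], by linarith, by linarith⟩
  · simpa using tendsto_const_nhds.add
      ((tendsto_one_div_add_atTop_nhds_zero_nat (𝕜 := ℝ)).smul_const (of fun (_ : ι) (_ : ι) => (1 : ℝ)))

variable [Fintype ι]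

theorem mem_spectrum_iff_exists_mulVec_eq_smul {K : Type*} [Field K] [DecidableEq ι]
    {A : Matrix ι ι K} {μ : K} : μ ∈ spectrum K A ↔ ∃ v ≠ 0, A *ᵥ v = μ • v := by
  rw [← spectrum_toLin', ← Module.End.hasEigenvalue_iff_mem_spectrum,
    Module.End.hasEigenvalue_iff, Submodule.ne_bot_iff]
  simp [and_comm]

theorem map_mem_spectrum_map {K L : Type*} [Field K] [Field L] [DecidableEq ι] (f : K →+* L)
    {A : Matrix ι ι K} {μ : K} (hμ : μ ∈ spectrum K A) : f μ ∈ spectrum L (A.map f) := by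
  obtain ⟨v, hv, hAv⟩ := mem_spectrum_iff_exists_mulVec_eq_smul.mp hμ
  refine mem_spectrum_iff_exists_mulVec_eq_smul.mpr ⟨f ∘ v, ?_, funext fun i => ?_⟩
  · exact fun h => hv (funext fun i => f.injective (by simpa using congrFun h i))
  · rw [← RingHom.map_mulVec, hAv]
    simp

theorem re_nonneg_of_mem_spectrum [DecidableEq ι] {B : Matrix ι ι ℂ} (hB : (B + Bᴴ).PosSemidef)
    {μ : ℂ} (hμ : μ ∈ spectrum ℂ B) : 0 ≤ μ.re := by
  obtain ⟨v, hv, hBv⟩ := mem_spectrum_iff_exists_mulVec_eq_smul.mp hμ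
  have hquad : star v ⬝ᵥ ((B + Bᴴ) *ᵥ v) = (2 * μ.re : ℝ) * (star v ⬝ᵥ v) := by
    rw [add_mulVec, dotProduct_add, dotProduct_mulVec (star v) Bᴴ, ← star_mulVec, hBv]
    simp [dotProduct_smul, star_smul, ← add_mul, Complex.add_conj]
  have hnorm : 0 < (star v ⬝ᵥ v).re :=
    (Complex.pos_iff.mp (dotProduct_star_self_pos_iff.mpr hv)).1
  have hquad_nonneg := (Complex.nonneg_iff.mp (hB.dotProduct_mulVec_nonneg v)).1
  rw [hquad, Complex.re_ofReal_mul] at hquad_nonneg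
  linarith [nonneg_of_mul_nonneg_left hquad_nonneg hnorm]

theorem exists_pos_smul_le {y z : ι → ℝ} (hz : ∀ i, 0 < z i) : ∃ δ > (0 : ℝ), δ • y ≤ z := by
  have hsmall : ∀ᶠ δ in 𝓝 (0 : ℝ), ∀ i, δ * y i < z i := eventually_all.mpr fun i =>
    (tendsto_id.mul_const (y i)).eventually_lt_const (by simpa using hz i)
  obtain ⟨δ, hδ, hδ_pos⟩ := ((hsmall.filter_mono nhdsWithin_le_nhds).and
    (self_mem_nhdsWithin : ∀ᶠ δ in 𝓝[>] (0 : ℝ), 0 < δ)).exists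
  exact ⟨δ, hδ_pos, fun i => (hδ i).le⟩

section CollatzWielandt

variable {M N : Matrix ι ι ℝ}

/-- For a nonnegative matrix, the supremum of this set is the Perron root. -/
def collatzWielandtSet (M : Matrix ι ι ℝ) : Set ℝ :=
  {t | ∃ u ∈ stdSimplex ℝ ι, t • u ≤ M *ᵥ u}

theorem mulVec_le_mulVec (hMN : ∀ i j, M i j ≤ N i j) {u : ι → ℝ} (hu : 0 ≤ u) :
    M *ᵥ u ≤ N *ᵥ u :=
  fun i => sum_le_sum fun j _ => mul_le_mul_of_nonneg_right (hMN i j) (hu j)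

theorem mulVec_pos (hM : ∀ i j, 0 < M i j) {w : ι → ℝ} (hw : 0 ≤ w) (hw₀ : w ≠ 0) (i : ι) :
    0 < (M *ᵥ w) i := by
  obtain ⟨j, hj⟩ := Function.ne_iff.mp hw₀
  exact sum_pos' (fun k _ => mul_nonneg (hM i k).le (hw k))
    ⟨j, mem_univ j, mul_pos (hM i j) ((hw j).lt_of_ne' hj)⟩

theorem collatzWielandtSet_mono (hMN : ∀ i j, M i j ≤ N i j) :
    collatzWielandtSet M ⊆ collatzWielandtSet N :=
  fun _ ⟨u, hu, htu⟩ => ⟨u, hu, htu.trans (mulVec_le_mulVec hMN hu.1)⟩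

theorem mem_collatzWielandtSet_of_smul_le {u : ι → ℝ} (hu : 0 ≤ u) (hu₀ : u ≠ 0) {t : ℝ}
    (htu : t • u ≤ M *ᵥ u) : t ∈ collatzWielandtSet M := by
  obtain ⟨j, hj⟩ := Function.ne_iff.mp hu₀
  have hsum : 0 < ∑ i, u i := sum_pos' (fun i _ => hu i) ⟨j, mem_univ j, (hu j).lt_of_ne' hj⟩
  refine ⟨(∑ i, u i)⁻¹ • u, ⟨fun i => mul_nonneg (inv_nonneg.mpr hsum.le) (hu i), ?_⟩, ?_⟩
  · simp [← mul_sum, hsum.ne']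
  · rw [smul_comm, mulVec_smul]
    exact smul_le_smul_of_nonneg_left htu (by positivity)

theorem zero_mem_collatzWielandtSet [Nonempty ι] (hM : ∀ i j, 0 ≤ M i j) :
    0 ∈ collatzWielandtSet M := by
  obtain ⟨⟨u, hu⟩⟩ := (inferInstance : Nonempty (stdSimplex ℝ ι))
  exact ⟨u, hu, fun i => by
    simpa [mulVec, dotProduct] using sum_nonneg fun j _ => mul_nonneg (hM i j) (hu.1 j)⟩

theorem diag_mem_collatzWielandtSet [DecidableEq ι] (hM : ∀ i j, 0 ≤ M i j) (i : ι) :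
    M i i ∈ collatzWielandtSet M := by
  refine ⟨Pi.single i 1, single_mem_stdSimplex ℝ i, fun j => ?_⟩
  rcases eq_or_ne j i with rfl | hji <;> simp [*]

theorem le_sum_of_mem_collatzWielandtSet (hM : ∀ i j, 0 ≤ M i j) {t : ℝ}
    (ht : t ∈ collatzWielandtSet M) : t ≤ ∑ i, ∑ j, M i j := by
  obtain ⟨u, hu, htu⟩ := ht
  calc t = ∑ i, t * u i := by rw [← mul_sum, hu.2, mul_one]
    _ ≤ ∑ i, ∑ j, M i j * u j := sum_le_sum fun i _ => htu i
    _ ≤ ∑ i, ∑ j, M i j := sum_le_sum fun i _ => sum_le_sum fun j _ =>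
        mul_le_of_le_one_right (hM i j) (mem_Icc_of_mem_stdSimplex hu j).2

theorem exists_isGreatest_collatzWielandtSet [Nonempty ι] (hM : ∀ i j, 0 ≤ M i j) :
    ∃ ρ, IsGreatest (collatzWielandtSet M) ρ := by
  set K := {p : ℝ × (ι → ℝ) | p.1 • p.2 ≤ M *ᵥ p.2} ∩
    Set.Icc 0 (∑ i, ∑ j, M i j) ×ˢ stdSimplex ℝ ι
  have hK : IsCompact K := (isCompact_Icc.prod (isCompact_stdSimplex ℝ ι)).inter_left
    (isClosed_le (continuous_fst.smul continuous_snd)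
      (continuous_const.matrix_mulVec continuous_snd))
  have mem_K : ∀ t ∈ collatzWielandtSet M, 0 ≤ t → ∃ u, (t, u) ∈ K := fun t ⟨u, hu, htu⟩ ht =>
    ⟨u, htu, ⟨ht, le_sum_of_mem_collatzWielandtSet hM ⟨u, hu, htu⟩⟩, hu⟩
  obtain ⟨u₀, hu₀⟩ := mem_K 0 (zero_mem_collatzWielandtSet hM) le_rfl
  obtain ⟨⟨ρ, u⟩, ⟨hρu, ⟨hρ, -⟩, hu⟩, hmax⟩ :=
    hK.exists_isMaxOn ⟨_, hu₀⟩ continuous_fst.continuousOn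
  refine ⟨ρ, ⟨u, hu, hρu⟩, fun t ht => ?_⟩
  rcases le_or_gt t 0 with ht₀ | ht₀
  · exact ht₀.trans hρ
  · obtain ⟨v, hv⟩ := mem_K t ht ht₀.le
    exact hmax hv

theorem mulVec_eq_smul_of_isGreatest (hM : ∀ i j, 0 < M i j) {ρ : ℝ}
    (hρ : IsGreatest (collatzWielandtSet M) ρ) {u : ι → ℝ} (hu : u ∈ stdSimplex ℝ ι)
    (hρu : ρ • u ≤ M *ᵥ u) : M *ᵥ u = ρ • u := by
  by_contra hne
  have hu₀ : u ≠ 0 := by rintro rfl; simpa using hu.2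
  obtain ⟨i₀, -⟩ := Function.ne_iff.mp hu₀
  have hMu := mulVec_pos hM hu.1 hu₀
  set w := M *ᵥ u - ρ • u with hw
  obtain ⟨δ, hδ, hδw⟩ : ∃ δ > (0 : ℝ), δ • M *ᵥ u ≤ M *ᵥ w :=
    exists_pos_smul_le (mulVec_pos hM (sub_nonneg.mpr hρu) (sub_ne_zero.mpr hne))
  have hMMu : (ρ + δ) • M *ᵥ u ≤ M *ᵥ (M *ᵥ u) :=
    calc (ρ + δ) • M *ᵥ u = ρ • M *ᵥ u + δ • M *ᵥ u := add_smul _ _ _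
      _ ≤ ρ • M *ᵥ u + M *ᵥ w := add_le_add le_rfl hδw
      _ = M *ᵥ (M *ᵥ u) := by rw [← mulVec_smul, ← mulVec_add, hw, add_sub_cancel]
  linarith [hρ.2 (mem_collatzWielandtSet_of_smul_le (fun i => (hMu i).le)
    (fun h => (hMu i₀).ne' (congrFun h i₀)) hMMu)]

theorem exists_perron_eigenvector [Nonempty ι] (hM : ∀ i j, 0 ≤ M i j) :
    ∃ ρ ∈ upperBounds (collatzWielandtSet M), ∃ v ∈ stdSimplex ℝ ι, M *ᵥ v = ρ • v := by
  obtain ⟨P, hP, hPlim⟩ := exists_seq_pos_tendsto_of_nonneg hM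
  choose ρ hρ using fun k => exists_isGreatest_collatzWielandtSet fun i j => (hP k i j).1.le
  choose u hu hρu using fun k => (hρ k).1
  have hPu : ∀ k, P k *ᵥ u k = ρ k • u k := fun k =>
    mulVec_eq_smul_of_isGreatest (fun i j => (hP k i j).1) (hρ k) (hu k) (hρu k)
  have hM_le : ∀ k, collatzWielandtSet M ⊆ collatzWielandtSet (P k) := fun k =>
    collatzWielandtSet_mono fun i j => (hP k i j).2.1
  have hbound : ∀ k, (ρ k, u k) ∈ Set.Icc 0 (ρ 0) ×ˢ stdSimplex ℝ ι := fun k =>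
    ⟨⟨(hρ k).2 (hM_le k (zero_mem_collatzWielandtSet hM)),
      (hρ 0).2 (collatzWielandtSet_mono (fun i j => (hP k i j).2.2) (hρ k).1)⟩, hu k⟩
  obtain ⟨⟨r, v⟩, ⟨-, hv⟩, φ, hφ, hlim⟩ :=
    (isCompact_Icc.prod (isCompact_stdSimplex ℝ ι)).tendsto_subseq hbound
  have hρlim : Tendsto (ρ ∘ φ) atTop (𝓝 r) := hlim.fst_nhds
  have hulim : Tendsto (u ∘ φ) atTop (𝓝 v) := hlim.snd_nhds
  have hPulim : Tendsto (fun k => (P ∘ φ) k *ᵥ (u ∘ φ) k) atTop (𝓝 (M *ᵥ v)) :=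
    ((continuous_fst.matrix_mulVec continuous_snd).tendsto (M, v)).comp
      ((hPlim.comp hφ.tendsto_atTop).prodMk_nhds hulim)
  refine ⟨r, fun t ht => ge_of_tendsto hρlim (Eventually.of_forall fun k => (hρ (φ k)).2
    (hM_le _ ht)), v, hv, tendsto_nhds_unique hPulim ?_⟩
  simpa only [Function.comp_apply, hPu] using hρlim.smul hulim

theorem norm_mem_collatzWielandtSet [DecidableEq ι] (hM : ∀ i j, 0 ≤ M i j) {μ : ℂ}
    (hμ : μ ∈ spectrum ℂ (M.map Complex.ofReal)) : ‖μ‖ ∈ collatzWielandtSet M := by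
  obtain ⟨v, hv, hMv⟩ := mem_spectrum_iff_exists_mulVec_eq_smul.mp hμ
  refine mem_collatzWielandtSet_of_smul_le (u := fun i => ‖v i‖) (fun i => norm_nonneg _)
    (fun h => hv (funext fun i => norm_eq_zero.mp (congrFun h i))) fun i => ?_
  calc ‖μ‖ * ‖v i‖ = ‖∑ j, (M i j : ℂ) * v j‖ := by
        rw [← norm_mul, ← smul_eq_mul, ← Pi.smul_apply, ← hMv]; rfl
    _ ≤ ∑ j, ‖(M i j : ℂ) * v j‖ := norm_sum_le _ _
    _ = (M *ᵥ fun i => ‖v i‖) i := by simp [mulVec, dotProduct, abs_of_nonneg (hM i _)]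

end CollatzWielandt

end Matrix

theorem stmt_12 (n : ℕ) (hn : 0 < n) (A : Matrix (Fin n) (Fin n) ℝ)
    (hnonneg : ∀ i j, 0 ≤ A i j)
    (hcompl : ∀ i j, A i j + A j i = 1 / n) :
    (∀ μ ∈ spectrum ℂ (A.map Complex.ofReal), 0 ≤ μ.re) ∧
      (Matrix.charpoly (A.map Complex.ofReal)).roots.sum = 1 / 2 ∧
      ∃ ρ : ℝ, 0 < ρ ∧ (ρ : ℂ) ∈ spectrum ℂ (A.map Complex.ofReal) ∧
        ∀ μ ∈ spectrum ℂ (A.map Complex.ofReal), ‖μ‖ ≤ ρ := by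
  have : Nonempty (Fin n) := ⟨⟨0, hn⟩⟩
  have hdiag : ∀ i, A i i = 1 / n / 2 := fun i => by linarith [hcompl i i]
  have hsym : A.map Complex.ofReal + (A.map Complex.ofReal)ᴴ =
      (1 / n : ℝ) • vecMulVec (star 1) (1 : Fin n → ℂ) := by
    ext i j
    simp [vecMulVec, ← hcompl i j]
  refine ⟨fun μ => re_nonneg_of_mem_spectrum (hsym ▸ (posSemidef_vecMulVec_star_self 1).smul
    (by positivity)), ?_, ?_⟩
  · rw [← trace_eq_sum_roots_charpoly]
    simp only [trace, diag_apply, map_apply, hdiag, sum_const, card_univ, Fintype.card_fin,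
      nsmul_eq_mul]
    push_cast
    field_simp
  · obtain ⟨ρ, hρ, v, hv, hAv⟩ := exists_perron_eigenvector hnonneg
    have hv₀ : v ≠ 0 := by rintro rfl; simpa using hv.2
    refine ⟨ρ, ?_, map_mem_spectrum_map Complex.ofRealHom
      (mem_spectrum_iff_exists_mulVec_eq_smul.mpr ⟨v, hv₀, hAv⟩),
      fun μ hμ => hρ (norm_mem_collatzWielandtSet hnonneg hμ)⟩
    calc (0 : ℝ) < A ⟨0, hn⟩ ⟨0, hn⟩ := by rw [hdiag]; positivity
      _ ≤ ρ := hρ (diag_mem_collatzWielandtSet hnonneg _)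
end

section
/- Let A be the tournament matrix of an n-vertex tournament T with eigenvalues λ₁,…,λₙ. Then the number of directed cycles of length ℓ in T, normalized by (ℓ-1)!/2^ℓ · C(n,ℓ), equals (2^ℓ/n^ℓ)·Σᵢ λᵢ^ℓ + O(1/n); equivalently, the trace of the ℓ-th power of the adjacency matrix of T equals ℓ times the number of directed ℓ-cycles in T plus a term of order O(n^{ℓ-1}). -/
/-!
For a 0/1 matrix, `trace (M ^ ℓ)` counts the closed walks `g : ℤ/ℓ → V` with `M (g i) (g (i+1)) = 1`
for all `i`; the injective ones are the directed `ℓ`-cycles counted with their `ℓ` rotations. The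
remaining walks are non-injective maps, of which there are
`n ^ ℓ - n (n - 1) ⋯ (n - ℓ + 1) ≤ ℓ ^ 2 n ^ (ℓ - 1)`.
-/

open Matrix Finset

theorem sum_fun_fin_succ {k : ℕ} {β M : Type*} [Fintype β] [AddCommMonoid M]
    (F : (Fin (k + 1) → β) → M) : ∑ g, F g = ∑ a, ∑ f : Fin k → β, F (Fin.cons a f) := by
  rw [← (Fin.consEquiv fun _ => β).sum_comp, Fintype.sum_prod_type]
  rfl

section Walks

variable {n R : Type*} [Fintype n] [DecidableEq n] [CommSemiring R]

theorem pow_succ_apply_eq_sum_walks (M : Matrix n n R) (k : ℕ) (a b : n) :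
    (M ^ (k + 1)) a b =
      ∑ f : Fin k → n, ∏ i : Fin (k + 1),
        M ((Fin.cons a f : Fin (k + 1) → n) i) ((Fin.snoc f b : Fin (k + 1) → n) i) := by
  induction k generalizing a with
  | zero => simp [Fin.snoc]
  | succ k ih =>
    rw [pow_succ', mul_apply, sum_fun_fin_succ]
    refine sum_congr rfl fun c _ => ?_
    rw [ih, mul_sum]
    refine sum_congr rfl fun f _ => ?_
    conv_rhs => rw [Fin.prod_univ_succ]
    simp only [Fin.cons_zero, Fin.cons_succ, ← Fin.cons_snoc_eq_snoc_cons]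

theorem trace_pow_eq_sum_cyclic (M : Matrix n n R) (k : ℕ) [NeZero k] :
    trace (M ^ k) = ∑ g : Fin k → n, ∏ i, M (g i) (g (i + 1)) := by
  obtain ⟨m, rfl⟩ := Nat.exists_eq_succ_of_ne_zero (NeZero.ne k)
  simp only [trace, Matrix.diag, pow_succ_apply_eq_sum_walks, sum_fun_fin_succ,
    Fin.snoc_eq_cons_rotate, finRotate_apply]

variable [DecidableEq R]

def closedWalks (M : Matrix n n R) (k : ℕ) [NeZero k] : Finset (Fin k → n) :=
  {g | ∀ i, M (g i) (g (i + 1)) = 1}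

theorem trace_pow_eq_card_closedWalks (M : Matrix n n R) (hM : ∀ i j, M i j = 0 ∨ M i j = 1)
    (k : ℕ) [NeZero k] : trace (M ^ k) = #(closedWalks M k) := by
  have hM' : ∀ i j, M i j = if M i j = 1 then 1 else 0 := fun i j => by
    rcases hM i j with h | h <;> simp [h]
  rw [trace_pow_eq_sum_cyclic, closedWalks, ← sum_boole]
  refine sum_congr rfl fun g _ => ?_
  conv_lhs => enter [2, i]; rw [hM']
  rw [prod_boole]
  simp

end Walks

theorem pow_le_descFactorial_add (n : ℕ) :
    ∀ k : ℕ, n ^ k ≤ n.descFactorial k + k ^ 2 * n ^ (k - 1)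
  | 0 => by simp
  | k + 1 => by
    have hD : n * n.descFactorial k ≤ n.descFactorial (k + 1) + k * n ^ k := calc
      n * n.descFactorial k ≤ (n - k + k) * n.descFactorial k := by gcongr; exact le_tsub_add
      _ = n.descFactorial (k + 1) + k * n.descFactorial k := by rw [Nat.descFactorial_succ, add_mul]
      _ ≤ n.descFactorial (k + 1) + k * n ^ k := by gcongr; exact Nat.descFactorial_le_pow n k
    have hpow : n * (k ^ 2 * n ^ (k - 1)) = k ^ 2 * n ^ k := by
      rcases k with _ | k
      · simp
      · simp only [add_tsub_cancel_right, pow_succ]; ring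
    calc n ^ (k + 1) = n * n ^ k := pow_succ' n k
      _ ≤ n * (n.descFactorial k + k ^ 2 * n ^ (k - 1)) := by
        gcongr; exact pow_le_descFactorial_add n k
      _ ≤ n.descFactorial (k + 1) + (k + 1) ^ 2 * n ^ (k + 1 - 1) := by
        rw [mul_add, hpow, add_tsub_cancel_right]; nlinarith [Nat.zero_le (n ^ k)]

theorem card_injective_eq_descFactorial {α β : Type*} [Fintype α] [Fintype β] [DecidableEq α]
    [DecidableEq β] :
    #{g : α → β | Function.Injective g} = (Fintype.card β).descFactorial (Fintype.card α) := by
  rw [← Fintype.card_subtype, ← Fintype.card_embedding_eq]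
  exact Fintype.card_congr (Equiv.subtypeInjectiveEquivEmbedding α β)

theorem card_not_injective_le {α β : Type*} [Fintype α] [Fintype β] [DecidableEq α]
    [DecidableEq β] :
    #{g : α → β | ¬Function.Injective g} ≤
      Fintype.card α ^ 2 * Fintype.card β ^ (Fintype.card α - 1) := by
  have hsplit := card_filter_add_card_filter_not (s := univ) (fun g : α → β => Function.Injective g)
  rw [card_injective_eq_descFactorial, card_univ, Fintype.card_fun] at hsplit
  have := pow_le_descFactorial_add (Fintype.card β) (Fintype.card α)
  omega

theorem stmt_13 (ℓ : ℕ) (hℓ : 3 ≤ ℓ) :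
    ∃ C : ℝ, ∀ (n : ℕ) (M : Matrix (Fin n) (Fin n) ℝ),
      (∀ i, M i i = 0) → (∀ i j, M i j = 0 ∨ M i j = 1) →
      (∀ i j, i ≠ j → M i j + M j i = 1) →
      |Matrix.trace (M ^ ℓ) -
          (Set.ncard {f : ZMod ℓ → Fin n |
              Function.Injective f ∧ ∀ i, M (f i) (f (i + 1)) = 1} : ℝ)| ≤
        C * (n : ℝ) ^ (ℓ - 1) := by
  refine ⟨(ℓ : ℝ) ^ 2, fun n M _ hM _ => ?_⟩
  obtain ⟨m, rfl⟩ : ∃ m, ℓ = m + 1 := ⟨ℓ - 1, by omega⟩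
  -- `ZMod (m + 1)` is `Fin (m + 1)` by definition
  change |trace (M ^ (m + 1)) - (Set.ncard {f : Fin (m + 1) → Fin n |
    Function.Injective f ∧ ∀ i, M (f i) (f (i + 1)) = 1} : ℝ)| ≤ _
  set W := closedWalks M (m + 1)
  have hcycles : {f : Fin (m + 1) → Fin n | Function.Injective f ∧ ∀ i, M (f i) (f (i + 1)) = 1}
      = ↑(W.filter Function.Injective) := by
    ext f
    simp [W, closedWalks, and_comm]
  have hsplit := card_filter_add_card_filter_not (s := W) Function.Injective
  have hbound : #(W.filter fun f => ¬Function.Injective f) ≤ (m + 1) ^ 2 * n ^ m := by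
    simpa using (card_le_card (filter_subset_filter _ (subset_univ W))).trans card_not_injective_le
  rw [hcycles, Set.ncard_coe_finset, trace_pow_eq_card_closedWalks M hM, ← hsplit]
  push_cast
  rw [add_sub_cancel_left, abs_of_nonneg (Nat.cast_nonneg _)]
  exact_mod_cast hbound
end

section
/- Let X be a multiset of complex numbers, each with nonnegative real part, whose real parts sum to at most 1/2, closed under complex conjugation with matching multiplicities, and such that Σ_{x∈X} |x|² < ∞. Suppose ρ = max_{x∈X} |x| is attained by a positive real element ρ ∈ X. Then for every odd ℓ ≥ 3, Σ_{x∈X} x^ℓ ≤ (1/2)^ℓ (the sum being real and absolutely convergent). -/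
/-! For odd `ℓ`, comparing `z ^ ℓ` with `(-conj z) ^ ℓ` via the geometric sum gives
`Re (z ^ ℓ) ≤ ℓ |z|^(ℓ-1) Re z ≤ ℓ ρ^(ℓ-1) Re z`. Summing, with the term `ρ` itself kept exact,
`Σ Re (x ^ ℓ) ≤ ρ^ℓ + ℓ ρ^(ℓ-1) (1/2 - ρ)`, which is at most `(1/2)^ℓ` because the right side is
the tangent line of the convex function `t ↦ t^ℓ` at `ρ`, evaluated at `1/2`. Conjugation
symmetry makes the sum real. -/

open Complex ComplexConjugate Finset

theorem pow_add_mul_sub_le_pow {R : Type*} [CommRing R] [PartialOrder R] [IsOrderedRing R]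
    {s t : R} (ht : 0 ≤ t) (hts : t ≤ s) (n : ℕ) :
    t ^ n + n * t ^ (n - 1) * (s - t) ≤ s ^ n := by
  have hsum : (n : R) * t ^ (n - 1) ≤ ∑ i ∈ range n, s ^ i * t ^ (n - 1 - i) :=
    calc (n : R) * t ^ (n - 1) = ∑ i ∈ range n, t ^ i * t ^ (n - 1 - i) := by
          rw [sum_congr rfl fun i hi => by rw [← pow_add, Nat.add_sub_cancel' (by grind)]]
          simp
      _ ≤ ∑ i ∈ range n, s ^ i * t ^ (n - 1 - i) := by gcongr
  have := mul_le_mul_of_nonneg_right hsum (sub_nonneg.2 hts)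
  rw [geom_sum₂_mul] at this
  exact le_sub_iff_add_le'.mp this

theorem norm_pow_sub_pow_le_of_norm_le {R : Type*} [SeminormedCommRing R] [NormOneClass R]
    {a b : R} {r : ℝ} (ha : ‖a‖ ≤ r) (hb : ‖b‖ ≤ r) (n : ℕ) :
    ‖a ^ n - b ^ n‖ ≤ n * r ^ (n - 1) * ‖a - b‖ := by
  have hr : 0 ≤ r := (norm_nonneg a).trans ha
  have hterm : ∀ i ∈ range n, ‖a ^ i * b ^ (n - 1 - i)‖ ≤ r ^ (n - 1) := fun i hi =>
    calc ‖a ^ i * b ^ (n - 1 - i)‖ ≤ ‖a‖ ^ i * ‖b‖ ^ (n - 1 - i) := by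
          grw [norm_mul_le, norm_pow_le, norm_pow_le]
      _ ≤ r ^ i * r ^ (n - 1 - i) := by gcongr
      _ = r ^ (n - 1) := by rw [← pow_add, Nat.add_sub_cancel' (by grind)]
  rw [← geom_sum₂_mul]
  grw [norm_mul_le, norm_sum_le, sum_le_sum hterm]
  simp

theorem abs_re_pow_le_of_odd (z : ℂ) {ℓ : ℕ} (hℓ : Odd ℓ) :
    |(z ^ ℓ).re| ≤ ℓ * ‖z‖ ^ (ℓ - 1) * |z.re| := by
  -- `ℓ` odd: `z ^ ℓ - (-conj z) ^ ℓ = 2 Re (z ^ ℓ)` and `z - (-conj z) = 2 Re z`.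
  have h := norm_pow_sub_pow_le_of_norm_le (a := z) (b := -conj z) le_rfl
    (by rw [norm_neg, norm_conj]) ℓ
  rw [hℓ.neg_pow, sub_neg_eq_add, sub_neg_eq_add, ← map_pow, add_conj, add_conj,
    norm_real, norm_real, norm_mul, norm_mul] at h
  simp only [Real.norm_ofNat, Real.norm_eq_abs] at h
  linarith

theorem summable_norm_pow_of_summable_sq {α R : Type*} [SeminormedRing R] {f : α → R} {ρ : ℝ}
    (hρ : ∀ n, ‖f n‖ ≤ ρ) (hsq : Summable fun n => ‖f n‖ ^ 2) {ℓ : ℕ} (hℓ : 2 ≤ ℓ) :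
    Summable fun n => ‖f n ^ ℓ‖ := by
  refine .of_nonneg_of_le (fun n => norm_nonneg _) (fun n => ?_) (hsq.mul_left (ρ ^ (ℓ - 2)))
  calc ‖f n ^ ℓ‖ ≤ ‖f n‖ ^ ℓ := norm_pow_le' _ (by omega)
    _ = ‖f n‖ ^ (ℓ - 2) * ‖f n‖ ^ 2 := by rw [← pow_add, Nat.sub_add_cancel hℓ]
    _ ≤ ρ ^ (ℓ - 2) * ‖f n‖ ^ 2 := by gcongr; exact hρ n

theorem im_tsum_eq_zero_of_conj_perm {α : Type*} (g : α → ℂ) (e : Equiv.Perm α)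
    (he : ∀ n, g (e n) = conj (g n)) : (∑' n, g n).im = 0 := by
  rw [← conj_eq_iff_im, conj_tsum, ← e.tsum_eq g]
  exact tsum_congr fun n => (he n).symm

theorem re_tsum_pow_le {α : Type*} {f : α → ℂ} {ρ : ℝ} {ℓ : ℕ} (hodd : Odd ℓ)
    (hre : ∀ n, 0 ≤ (f n).re) (hre_sum : Summable fun n => (f n).re)
    (hρ_max : ∀ n, ‖f n‖ ≤ ρ) (hsum : Summable fun n => f n ^ ℓ) (a : α) (ha : f a = ρ) :
    (∑' n, f n ^ ℓ).re ≤ ρ ^ ℓ + ℓ * ρ ^ (ℓ - 1) * (∑' n, (f n).re - ρ) := by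
  set c := ℓ * ρ ^ (ℓ - 1)
  have hgap : ∀ n, 0 ≤ c * (f n).re - (f n ^ ℓ).re := fun n => by
    have := calc (f n ^ ℓ).re ≤ |(f n ^ ℓ).re| := le_abs_self _
      _ ≤ ℓ * ‖f n‖ ^ (ℓ - 1) * |(f n).re| := abs_re_pow_le_of_odd (f n) hodd
      _ ≤ c * (f n).re := by
        rw [abs_of_nonneg (hre n)]
        simp only [c]
        gcongr
        · exact hre n
        · exact hρ_max n
    linarith
  have hre_pow_sum : Summable fun n => (f n ^ ℓ).re := reCLM.summable hsum
  have hle := (hre_sum.mul_left c |>.sub hre_pow_sum).le_tsum a fun n _ => hgap n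
  rw [(hre_sum.mul_left c).tsum_sub hre_pow_sum, tsum_mul_left] at hle
  simp only [ha, ofReal_re, ← ofReal_pow] at hle
  rw [re_tsum hsum]
  linarith

theorem stmt_14_general (f : ℕ → ℂ)
    (hre : ∀ n, 0 ≤ (f n).re)
    (hre_sum : Summable fun n => (f n).re)
    (hre_half : ∑' n, (f n).re ≤ 1 / 2)
    (hconj : ∃ e : Equiv.Perm ℕ, ∀ n, f (e n) = starRingEnd ℂ (f n))
    (hsq : Summable fun n => ‖f n‖ ^ 2)
    (ρ : ℝ) (hρ_mem : ∃ n, f n = (ρ : ℂ))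
    (hρ_max : ∀ n, ‖f n‖ ≤ ρ)
    (ℓ : ℕ) (hℓ : 3 ≤ ℓ) (hodd : Odd ℓ) :
    (Summable fun n => ‖f n ^ ℓ‖) ∧
      (∑' n, f n ^ ℓ).im = 0 ∧ (∑' n, f n ^ ℓ).re ≤ (1 / 2) ^ ℓ := by
  obtain ⟨a, ha⟩ := hρ_mem
  obtain ⟨e, he⟩ := hconj
  have hsum := summable_norm_pow_of_summable_sq (ℓ := ℓ) hρ_max hsq (by omega)
  refine ⟨hsum, im_tsum_eq_zero_of_conj_perm _ e fun n => by rw [he, map_pow], ?_⟩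
  have hρ : 0 ≤ ρ := (norm_nonneg _).trans (hρ_max a)
  have hρ_half : ρ ≤ 1 / 2 := by
    have := hre_sum.le_tsum a fun n _ => hre n
    rw [ha, ofReal_re] at this
    linarith
  calc (∑' n, f n ^ ℓ).re ≤ ρ ^ ℓ + ℓ * ρ ^ (ℓ - 1) * (∑' n, (f n).re - ρ) :=
        re_tsum_pow_le hodd hre hre_sum hρ_max hsum.of_norm a ha
    _ ≤ ρ ^ ℓ + ℓ * ρ ^ (ℓ - 1) * (1 / 2 - ρ) := by gcongr
    _ ≤ (1 / 2) ^ ℓ := pow_add_mul_sub_le_pow hρ hρ_half ℓ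

theorem stmt_14 (f : ℕ → ℂ)
    (hre : ∀ n, 0 ≤ (f n).re)
    (hre_sum : Summable fun n => (f n).re)
    (hre_half : ∑' n, (f n).re ≤ 1 / 2)
    (hconj : ∃ e : Equiv.Perm ℕ, ∀ n, f (e n) = starRingEnd ℂ (f n))
    (hsq : Summable fun n => ‖f n‖ ^ 2)
    (ρ : ℝ) (hρ : 0 < ρ) (hρ_mem : ∃ n, f n = (ρ : ℂ))
    (hρ_max : ∀ n, ‖f n‖ ≤ ρ)
    (ℓ : ℕ) (hℓ : 3 ≤ ℓ) (hodd : Odd ℓ) :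
    (Summable fun n => ‖f n ^ ℓ‖) ∧
      (∑' n, f n ^ ℓ).im = 0 ∧ (∑' n, f n ^ ℓ).re ≤ (1 / 2) ^ ℓ :=
  stmt_14_general f hre hre_sum hre_half hconj hsq ρ hρ_mem hρ_max ℓ hℓ hodd
end

section
/- Let X be a multiset of complex numbers closed under conjugation, with Re(x) ≥ 0 for all x ∈ X, Σ_{x∈X} Re(x) ≤ 1/2, and |x| ≤ ρ for all x ∈ X where ρ ∈ X is positive real. Then for every even ℓ ≥ 6 not divisible by 4, Σ_{x∈X} x^ℓ ≤ (1/2)^ℓ, with equality only if ρ = 1/2 and ρ is the only nonzero element of X. -/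
/-!
Write `ℓ = 4k + 2`. For `|θ| ≤ π/2` one has `cos (ℓθ) ≤ ℓ cos θ`, hence every `z` with `0 ≤ Re z`
and `‖z‖ ≤ ρ` satisfies `Re (z ^ ℓ) ≤ ℓ ρ^(ℓ-1) Re z`. Applying this to every element but `ρ` and
using `∑ Re x ≤ 1/2` bounds `Re ∑ x^ℓ` by `ρ^ℓ + ℓ ρ^(ℓ-1) (1/2 - ρ)`, the tangent line of the
strictly convex `t ↦ t^ℓ` at `ρ` evaluated at `1/2`; so it is at most `(1/2)^ℓ`, strictly unless
`ρ = 1/2`. In the equality case every other element is purely imaginary, `x = i b`, and its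
`ℓ`-th power has real part `-b^ℓ`, which must vanish. Invariance under conjugation makes the power
sum real.
-/

open Complex Real ComplexConjugate

theorem Real.neg_cos_le_two_div_pi_mul {v : ℝ} (hv : 0 ≤ v) : -Real.cos v ≤ 2 / π * v := by
  rcases le_or_gt v (π / 2) with hle | hgt
  · have := Real.cos_nonneg_of_mem_Icc ⟨by linarith [Real.pi_pos], hle⟩
    have : 0 ≤ 2 / π * v := by positivity
    linarith
  · have : 1 < 2 / π * v := by
      rw [div_mul_eq_mul_div, lt_div_iff₀ Real.pi_pos]
      linarith
    linarith [Real.neg_one_le_cos v]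

theorem Real.neg_cos_mul_le_mul_sin {L u : ℝ} (hL : 0 ≤ L) (hu₀ : 0 ≤ u) (hu : u ≤ π / 2) :
    -Real.cos (L * u) ≤ L * Real.sin u :=
  calc -Real.cos (L * u) ≤ 2 / π * (L * u) :=
        Real.neg_cos_le_two_div_pi_mul (mul_nonneg hL hu₀)
    _ = L * (2 / π * u) := by ring
    _ ≤ L * Real.sin u := mul_le_mul_of_nonneg_left (Real.mul_le_sin hu₀ hu) hL

theorem Real.cos_mul_le_mul_cos {n : ℕ} (hn : n % 4 = 2) {θ : ℝ} (hθ : |θ| ≤ π / 2) :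
    Real.cos (n * θ) ≤ n * Real.cos θ := by
  obtain ⟨k, rfl⟩ : ∃ k, n = 4 * k + 2 := ⟨n / 4, by omega⟩
  -- with `|θ| = π/2 - u`: `cos (n |θ|) = -cos (n u)` as `n/2` is odd, and `cos θ = sin u`
  obtain ⟨u, hθu⟩ : ∃ u, |θ| = π / 2 - u := ⟨π / 2 - |θ|, by ring⟩
  have hnθ : ((4 * k + 2 : ℕ) : ℝ) * |θ| = (2 * k + 1 : ℕ) * π - (4 * k + 2 : ℕ) * u := by
    rw [hθu]; push_cast; ring
  rw [← Real.cos_abs θ, ← Real.cos_abs (_ * θ), abs_mul, Nat.abs_cast, hnθ,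
    Real.cos_nat_mul_pi_sub, (odd_two_mul_add_one k).neg_one_pow, hθu, Real.cos_pi_div_two_sub,
    neg_one_mul]
  exact Real.neg_cos_mul_le_mul_sin (Nat.cast_nonneg _) (by linarith) (by linarith [abs_nonneg θ])

theorem Complex.re_pow_eq_norm_pow_mul_cos (z : ℂ) (n : ℕ) :
    (z ^ n).re = ‖z‖ ^ n * Real.cos (n * arg z) := by
  conv_lhs => rw [← norm_mul_exp_arg_mul_I z]
  rw [mul_pow, ← exp_nat_mul, ← ofReal_pow, ← mul_assoc, ← ofReal_natCast, ← ofReal_mul,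
    re_ofReal_mul, exp_ofReal_mul_I_re]

theorem Complex.re_pow_le_mul_re {n : ℕ} (hn : n % 4 = 2) {z : ℂ} {ρ : ℝ} (hz : 0 ≤ z.re)
    (hzρ : ‖z‖ ≤ ρ) : (z ^ n).re ≤ n * ρ ^ (n - 1) * z.re := by
  have harg : |arg z| ≤ π / 2 := abs_arg_le_pi_div_two_iff.2 hz
  have hcos : 0 ≤ Real.cos (arg z) :=
    Real.cos_nonneg_of_neg_pi_div_two_le_of_le (abs_le.1 harg).1 (abs_le.1 harg).2
  have hρ : 0 ≤ ρ := (norm_nonneg z).trans hzρ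
  have hpow : ‖z‖ ^ n ≤ ρ ^ (n - 1) * ‖z‖ := by
    rw [← pow_sub_one_mul (by omega : n ≠ 0)]
    gcongr
  rw [re_pow_eq_norm_pow_mul_cos, ← norm_mul_cos_arg z]
  rcases le_or_gt (Real.cos (n * arg z)) 0 with hneg | hpos
  · have : 0 ≤ n * ρ ^ (n - 1) * (‖z‖ * Real.cos (arg z)) := by positivity
    nlinarith [pow_nonneg (norm_nonneg z) n]
  · calc ‖z‖ ^ n * Real.cos (n * arg z) ≤ (ρ ^ (n - 1) * ‖z‖) * (n * Real.cos (arg z)) :=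
          mul_le_mul hpow (Real.cos_mul_le_mul_cos hn harg) hpos.le (by positivity)
      _ = n * ρ ^ (n - 1) * (‖z‖ * Real.cos (arg z)) := by ring

theorem Complex.eq_zero_of_re_eq_zero_of_re_pow_eq_zero {n : ℕ} (hn : n % 4 = 2) {z : ℂ}
    (hre : z.re = 0) (hre_pow : (z ^ n).re = 0) : z = 0 := by
  have hz : z = z.im * I := by apply Complex.ext <;> simp [hre]
  have hIn : I ^ n = -1 := by rw [I_pow_eq_pow_mod, hn, I_sq]
  rw [hz, mul_pow, hIn, mul_neg_one, ← ofReal_pow, neg_re, ofReal_re, neg_eq_zero,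
    pow_eq_zero_iff (by omega)] at hre_pow
  rw [hz, hre_pow, ofReal_zero, zero_mul]

theorem pow_add_mul_sub_lt_pow {n : ℕ} (hn : 2 ≤ n) {x y : ℝ} (hx : 0 ≤ x) (hxy : x < y) :
    x ^ n + n * x ^ (n - 1) * (y - x) < y ^ n := by
  have hslope := (strictConvexOn_pow hn).lt_slope_of_hasDerivAt hx (hx.trans hxy.le) hxy
    (hasDerivAt_pow n x)
  rw [slope_def_field, lt_div_iff₀ (sub_pos.2 hxy)] at hslope
  linarith

theorem Complex.im_tsum_eq_zero_of_conj {ι : Type*} {g : ι → ℂ} (e : Equiv.Perm ι)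
    (he : ∀ i, g (e i) = conj (g i)) : (∑' i, g i).im = 0 := by
  refine conj_eq_iff_im.1 ?_
  calc conj (∑' i, g i) = ∑' i, conj (g i) := conj_tsum g
    _ = ∑' i, g (e i) := by simp only [he]
    _ = ∑' i, g i := e.tsum_eq g

theorem summable_pow_of_summable_sq {ι : Type*} {a : ι → ℝ} {ρ : ℝ} {n : ℕ} (ha : ∀ i, 0 ≤ a i)
    (haρ : ∀ i, a i ≤ ρ) (h : Summable fun i => a i ^ 2) (hn : 2 ≤ n) :
    Summable fun i => a i ^ n :=
  (h.mul_left (ρ ^ (n - 2))).of_nonneg_of_le (fun i => pow_nonneg (ha i) n) fun i =>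
    calc a i ^ n = a i ^ (n - 2) * a i ^ 2 := by rw [← pow_add, Nat.sub_add_cancel hn]
      _ ≤ ρ ^ (n - 2) * a i ^ 2 := by gcongr; exacts [ha i, haρ i]

theorem eq_zero_of_tsum_le_apply {ι : Type*} {x : ι → ℝ} (hx : Summable x) (h₀ : ∀ i, 0 ≤ x i)
    {i j : ι} (h : ∑' k, x k ≤ x i) (hji : j ≠ i) : x j = 0 := by
  classical
  have := hx.sum_le_tsum {i, j} (fun k _ => h₀ k)
  rw [Finset.sum_pair hji.symm] at this
  linarith [h₀ j]

section GapSum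

variable {ι : Type*} {a b : ι → ℝ} {C : ℝ}

theorem tsum_le_add_mul_tsum_sub (ha : Summable a) (hb : Summable b) (hab : ∀ j, a j ≤ C * b j)
    (i : ι) : ∑' j, a j ≤ a i + C * (∑' j, b j - b i) := by
  have hgap := ((hb.mul_left C).sub ha).le_tsum i fun j _ => sub_nonneg.2 (hab j)
  rw [(hb.mul_left C).tsum_sub ha, hb.tsum_mul_left] at hgap
  linarith

theorem eq_mul_of_add_mul_tsum_sub_le_tsum (ha : Summable a) (hb : Summable b)
    (hab : ∀ j, a j ≤ C * b j) {i j : ι} (h : a i + C * (∑' j, b j - b i) ≤ ∑' j, a j)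
    (hji : j ≠ i) : a j = C * b j := by
  have hgap : ∑' j, (C * b j - a j) ≤ C * b i - a i := by
    rw [(hb.mul_left C).tsum_sub ha, hb.tsum_mul_left]
    linarith
  linarith [eq_zero_of_tsum_le_apply ((hb.mul_left C).sub ha) (fun j => sub_nonneg.2 (hab j))
    hgap hji]

end GapSum

theorem tsum_le_pow_of_le_mul {ι : Type*} {a b : ι → ℝ} {ρ s : ℝ} {n : ℕ} {i : ι} (hn : 2 ≤ n)
    (hρ : 0 < ρ) (ha : Summable a) (hb : Summable b) (hb₀ : ∀ j, 0 ≤ b j) (hbs : ∑' j, b j ≤ s)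
    (hab : ∀ j, a j ≤ n * ρ ^ (n - 1) * b j) (hai : a i = ρ ^ n) (hbi : b i = ρ) :
    ∑' j, a j ≤ s ^ n ∧ (∑' j, a j = s ^ n → ρ = s ∧ ∀ j ≠ i, a j = 0 ∧ b j = 0) := by
  have hbound := tsum_le_add_mul_tsum_sub ha hb hab i
  rw [hai, hbi] at hbound
  have hρs : ρ ≤ s := (hbi ▸ hb.le_tsum i fun j _ => hb₀ j).trans hbs
  have hC : 0 < (n : ℝ) * ρ ^ (n - 1) := mul_pos (Nat.cast_pos.2 (by omega)) (pow_pos hρ _)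
  have hCb : n * ρ ^ (n - 1) * (∑' j, b j - ρ) ≤ n * ρ ^ (n - 1) * (s - ρ) := by gcongr
  have htangent : ρ ^ n + n * ρ ^ (n - 1) * (s - ρ) ≤ s ^ n := by
    rcases hρs.eq_or_lt with rfl | hlt
    · simp
    · exact (pow_add_mul_sub_lt_pow hn hρ.le hlt).le
  refine ⟨by linarith, fun heq => ?_⟩
  have hρ_eq : ρ = s := by
    by_contra hne
    linarith [pow_add_mul_sub_lt_pow hn hρ.le (hρs.lt_of_ne hne)]
  subst hρ_eq
  have hb_tsum : ρ ≤ ∑' j, b j := sub_nonneg.1 <| (mul_nonneg_iff_of_pos_left hC).1 (by linarith)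
  refine ⟨rfl, fun j hji => ?_⟩
  have hbj : b j = 0 := eq_zero_of_tsum_le_apply hb hb₀ (by linarith) hji
  have haj := eq_mul_of_add_mul_tsum_sub_le_tsum ha hb hab (by rw [hai, hbi]; linarith) hji
  exact ⟨by rw [haj, hbj, mul_zero], hbj⟩

theorem stmt_15_general (f : ℕ → ℂ)
    (hre : ∀ n, 0 ≤ (f n).re)
    (hre_sum : Summable fun n => (f n).re)
    (hre_half : ∑' n, (f n).re ≤ 1 / 2)
    (hconj : ∃ e : Equiv.Perm ℕ, ∀ n, f (e n) = starRingEnd ℂ (f n))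
    (hsq : Summable fun n => ‖f n‖ ^ 2)
    (ρ : ℝ) (hρ : 0 < ρ) (hρ_mem : ∃ n, f n = (ρ : ℂ))
    (hρ_max : ∀ n, ‖f n‖ ≤ ρ)
    (ℓ : ℕ) (heven : Even ℓ) (hndiv : ¬ (4 ∣ ℓ)) :
    (Summable fun n => ‖f n ^ ℓ‖) ∧
      (∑' n, f n ^ ℓ).im = 0 ∧ (∑' n, f n ^ ℓ).re ≤ (1 / 2) ^ ℓ ∧
      ((∑' n, f n ^ ℓ).re = (1 / 2) ^ ℓ →
        ρ = 1 / 2 ∧ ∀ n, f n ≠ 0 → f n = (ρ : ℂ)) := by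
  obtain ⟨e, he⟩ := hconj
  obtain ⟨n₀, hn₀⟩ := hρ_mem
  have hℓ4 : ℓ % 4 = 2 := by obtain ⟨m, rfl⟩ := heven; omega
  have habs : Summable fun n => ‖f n ^ ℓ‖ := by
    simpa only [norm_pow] using
      summable_pow_of_summable_sq (fun n => norm_nonneg _) hρ_max hsq (by omega)
  refine ⟨habs, im_tsum_eq_zero_of_conj e fun n => by rw [he, map_pow], ?_⟩
  have hre_pow := hasSum_re habs.of_norm.hasSum
  obtain ⟨hle, heq⟩ := tsum_le_pow_of_le_mul (by omega) hρ hre_pow.summable hre_sum hre hre_half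
    (fun n => re_pow_le_mul_re hℓ4 (hre n) (hρ_max n)) (i := n₀)
    (by rw [hn₀, ← ofReal_pow, ofReal_re]) (by rw [hn₀, ofReal_re])
  rw [hre_pow.tsum_eq] at hle heq
  refine ⟨hle, fun h => ?_⟩
  obtain ⟨hρ_eq, hvanish⟩ := heq h
  refine ⟨hρ_eq, fun n hn => ?_⟩
  by_contra hne
  obtain ⟨hpow0, hre0⟩ := hvanish n (by rintro rfl; exact hne hn₀)
  exact hn (eq_zero_of_re_eq_zero_of_re_pow_eq_zero hℓ4 hre0 hpow0)

theorem stmt_15 (f : ℕ → ℂ)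
    (hre : ∀ n, 0 ≤ (f n).re)
    (hre_sum : Summable fun n => (f n).re)
    (hre_half : ∑' n, (f n).re ≤ 1 / 2)
    (hconj : ∃ e : Equiv.Perm ℕ, ∀ n, f (e n) = starRingEnd ℂ (f n))
    (hsq : Summable fun n => ‖f n‖ ^ 2)
    (ρ : ℝ) (hρ : 0 < ρ) (hρ_mem : ∃ n, f n = (ρ : ℂ))
    (hρ_max : ∀ n, ‖f n‖ ≤ ρ)
    (ℓ : ℕ) (hℓ : 6 ≤ ℓ) (heven : Even ℓ) (hndiv : ¬ (4 ∣ ℓ)) :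
    (Summable fun n => ‖f n ^ ℓ‖) ∧
      (∑' n, f n ^ ℓ).im = 0 ∧ (∑' n, f n ^ ℓ).re ≤ (1 / 2) ^ ℓ ∧
      ((∑' n, f n ^ ℓ).re = (1 / 2) ^ ℓ →
        ρ = 1 / 2 ∧ ∀ n, f n ≠ 0 → f n = (ρ : ℂ)) :=
  stmt_15_general f hre hre_sum hre_half hconj hsq ρ hρ hρ_mem hρ_max ℓ heven hndiv
end
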